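/- arXiv:2407.05534 — 11 statements merged into one kernel-verified Lean document; each statement's English description precedes it below -/
import Mathlib

section
/- Let q be a prime power, let n = 2r+1 ≥ 3 be an odd integer, and let α be an element of F_{q^n} whose minimal polynomial over F_q has degree n. Then there exist polynomials g, h ∈ F_q[X], each of degree at most r, such that h(α) ≠ 0 and α^q = g(α)/h(α) (equivalently, h(α)·α^q = g(α)). -/
open Polynomial

/-- existence half of Theorem 2.1 of the paper.
Let `q` be a prime power, `n = 2r+1 ≥ 3` odd, and `α ∈ F_{q^n}` of degree `n`
over `F_q`.  Then there are polynomials `g, h ∈ F_q[X]` of degree at most `r`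
with `h(α) ≠ 0` and `h(α)·α^q = g(α)`. -/
theorem stmt_0 (q n r : ℕ) (hq : IsPrimePow q) (hn : n = 2 * r + 1) (hn3 : 3 ≤ n)
    (F K : Type*) [Field F] [Fintype F] [Field K] [Fintype K] [Algebra F K]
    (hF : Fintype.card F = q) (hK : Fintype.card K = q ^ n)
    (α : K) (hα : (minpoly F α).natDegree = n) :
    ∃ g h : Polynomial F, g.natDegree ≤ r ∧ h.natDegree ≤ r ∧
      Polynomial.aeval α h ≠ 0 ∧
      Polynomial.aeval α h * α ^ q = Polynomial.aeval α g := by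
  have hq1 : 1 < q := hq.one_lt
  set P : (Fin (r + 1) → F) → F[X] :=
    fun v => ∑ i : Fin (r + 1), C (v i) * X ^ (i : ℕ) with hP
  have hdeg : ∀ v, (P v).natDegree ≤ r := by
    intro v
    apply Polynomial.natDegree_sum_le_of_forall_le
    intro i _
    calc (C (v i) * X ^ (i : ℕ)).natDegree ≤ (X ^ (i : ℕ) : F[X]).natDegree :=
          natDegree_C_mul_le _ _
      _ ≤ (i : ℕ) := by simp
      _ ≤ r := Nat.lt_succ_iff.mp i.isLt
  have hcoeff : ∀ v (j : Fin (r + 1)), (P v).coeff j = v j := by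
    intro v j
    simp only [hP, finset_sum_coeff, coeff_C_mul, coeff_X_pow]
    rw [Finset.sum_eq_single j]
    · simp
    · intro i _ hij
      have : (i : ℕ) ≠ (j : ℕ) := fun h => hij (Fin.ext h)
      rw [if_neg (Ne.symm this), mul_zero]
    · simp
  have hsub : ∀ v w, P v - P w = P (v - w) := by
    intro v w
    simp [hP, Pi.sub_apply, map_sub, sub_mul, Finset.sum_sub_distrib]
  have hzero : ∀ p : F[X], p.natDegree ≤ r → (aeval α) p = 0 → p = 0 := by
    intro p hpd hpz
    by_contra hp
    have h1 : (minpoly F α).degree ≤ p.degree :=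
      minpoly.degree_le_of_ne_zero F α hp hpz
    have h2 : (minpoly F α).natDegree ≤ p.natDegree := natDegree_le_natDegree h1
    rw [hα] at h2
    omega
  have hvzero : ∀ v : Fin (r + 1) → F, (aeval α) (P v) = 0 → v = 0 := by
    intro v hv
    have := hzero _ (hdeg v) hv
    funext j
    have := hcoeff v j
    rw [hzero _ (hdeg v) hv] at this
    simpa using this.symm
  have hcard : Fintype.card K <
      Fintype.card ((Fin (r + 1) → F) × (Fin (r + 1) → F)) := by
    rw [Fintype.card_prod, Fintype.card_fun, hF, hK, Fintype.card_fin,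
      ← pow_add, hn]
    exact Nat.pow_lt_pow_right hq1 (by omega)
  obtain ⟨x, y, hxy, heq⟩ := Fintype.exists_ne_map_eq_of_card_lt
    (fun p : (Fin (r + 1) → F) × (Fin (r + 1) → F) =>
      (aeval α) (P p.1) + (aeval α) (P p.2) * α ^ q) hcard
  refine ⟨P (y.1 - x.1), P (x.2 - y.2), hdeg _, hdeg _, ?_, ?_⟩
  · intro hzero2
    have h2 : x.2 - y.2 = 0 := hvzero _ hzero2
    have h2' : x.2 = y.2 := by
      funext j; have := congrFun h2 j; simpa [sub_eq_zero] using this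
    rw [h2'] at heq
    have h1 : (aeval α) (P x.1) - (aeval α) (P y.1) = 0 := by
      have := add_right_cancel heq
      rw [this]; ring
    rw [← map_sub, hsub] at h1
    have h1' : x.1 = y.1 := by
      have := hvzero _ h1
      funext j; have := congrFun this j; simpa [sub_eq_zero] using this
    exact hxy (Prod.ext h1' h2')
  · rw [← hsub, ← hsub, map_sub, map_sub]
    linear_combination heq
end

section
/- Let q be a prime power, let n = 2r+1 ≥ 3 be an odd integer, and let α be an element of F_{q^n} whose minimal polynomial over F_q has degree n. If g₁, h₁, g₂, h₂ ∈ F_q[X] are polynomials of degree at most r such that h₁(α) ≠ 0, h₂(α) ≠ 0, h₁(α)·α^q = g₁(α), and h₂(α)·α^q = g₂(α), then g₁·h₂ = g₂·h₁ as polynomials in F_q[X]. -/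
/-- uniqueness half of Theorem 2.1 of the paper.
If `g₁/h₁` and `g₂/h₂` both express the `q`-power Frobenius at a degree-`n`
element `α`, with all four polynomials of degree at most `r`, then
`g₁·h₂ = g₂·h₁` in `F_q[X]`. -/
theorem stmt_1 (q n r : ℕ) (hq : IsPrimePow q) (hn : n = 2 * r + 1) (hn3 : 3 ≤ n)
    (F K : Type*) [Field F] [Fintype F] [Field K] [Fintype K] [Algebra F K]
    (hF : Fintype.card F = q) (hK : Fintype.card K = q ^ n)
    (α : K) (hα : (minpoly F α).natDegree = n)
    (g₁ h₁ g₂ h₂ : Polynomial F)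
    (hg₁ : g₁.natDegree ≤ r) (hh₁ : h₁.natDegree ≤ r)
    (hg₂ : g₂.natDegree ≤ r) (hh₂ : h₂.natDegree ≤ r)
    (hne₁ : Polynomial.aeval α h₁ ≠ 0) (hne₂ : Polynomial.aeval α h₂ ≠ 0)
    (heq₁ : Polynomial.aeval α h₁ * α ^ q = Polynomial.aeval α g₁)
    (heq₂ : Polynomial.aeval α h₂ * α ^ q = Polynomial.aeval α g₂) :
    g₁ * h₂ = g₂ * h₁ := by
  -- the difference vanishes at α
  have hroot : Polynomial.aeval α (g₁ * h₂ - g₂ * h₁) = 0 := by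
    simp only [map_sub, map_mul, ← heq₁, ← heq₂]
    ring
  have hint : IsIntegral F α := Algebra.IsIntegral.isIntegral α
  have hdvd : minpoly F α ∣ (g₁ * h₂ - g₂ * h₁) := minpoly.dvd F α hroot
  by_contra hne
  have hsub : g₁ * h₂ - g₂ * h₁ ≠ 0 := sub_ne_zero.mpr hne
  have hdeg : n ≤ (g₁ * h₂ - g₂ * h₁).natDegree := by
    rw [← hα]
    exact Polynomial.natDegree_le_of_dvd hdvd hsub
  have hdeg2 : (g₁ * h₂ - g₂ * h₁).natDegree ≤ 2 * r := by
    apply le_trans (Polynomial.natDegree_sub_le _ _)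
    apply max_le <;>
      exact le_trans (Polynomial.natDegree_mul_le) (by omega)
  omega
end

section
/- Let q be a prime power, let n ≥ 3 be an odd integer with r = (n−1)/2, and let α be an element of F_{q^n} whose minimal polynomial over F_q has degree n. Let g, h ∈ F_q[x,y] be homogeneous polynomials of degree r with h(α,1) ≠ 0 and α^q·h(α,1) = g(α,1). Let a, b, c, d ∈ F_q with ad − bc ≠ 0, and set β := (aα+b)/(cα+d) (note cα + d ≠ 0 since α ∉ F_q). Define g̃(x,y) := a·g(dx−by, −cx+ay) + b·h(dx−by, −cx+ay) and h̃(x,y) := c·g(dx−by, −cx+ay) + d·h(dx−by, −cx+ay). Then h̃(β,1) ≠ 0 and β^q·h̃(β,1) = g̃(β,1). -/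
open MvPolynomial

lemma aeval_mul_of_isHomogeneous {F K : Type*} [CommSemiring F] [CommSemiring K] [Algebra F K]
    {σ : Type*} {m : ℕ} {φ : MvPolynomial σ F} (hφ : φ.IsHomogeneous m) (t : K) (v : σ → K) :
    aeval (fun i => t * v i) φ = t ^ m * aeval v φ := by
  rw [aeval_def, aeval_def, eval₂_eq, eval₂_eq, Finset.mul_sum]
  refine Finset.sum_congr rfl fun d hd => ?_
  have hdeg : ∑ i ∈ d.support, d i = m := by
    have := hφ (mem_support_iff.mp hd)
    simpa [Finsupp.weight, Finsupp.degree, Finsupp.linearCombination, Finsupp.sum] using this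
  simp_rw [mul_pow, Finset.prod_mul_distrib, Finset.prod_pow_eq_pow_sum, hdeg]
  ring

/-- first assertion of Lemma 2.4 of the paper.
If `g/h` (homogeneous of degree `r = (n-1)/2`) expresses the `q`-power Frobenius at
a degree-`n` element `α`, and `Γ = (a b; c d) ∈ PGL₂(F_q)` with `β = Γ(α)`, then the
transformed pair `g̃, h̃` expresses the `q`-power Frobenius at `β`. -/
theorem stmt_2 (q n r : ℕ) (hq : IsPrimePow q) (hn3 : 3 ≤ n) (hodd : Odd n)
    (hr : r = (n - 1) / 2)
    (F K : Type*) [Field F] [Fintype F] [Field K] [Fintype K] [Algebra F K]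
    (hF : Fintype.card F = q) (hK : Fintype.card K = q ^ n)
    (α : K) (hα : (minpoly F α).natDegree = n)
    (g h : MvPolynomial (Fin 2) F)
    (hg : g.IsHomogeneous r) (hh : h.IsHomogeneous r)
    (hh0 : MvPolynomial.aeval (fun i : Fin 2 => if i = 0 then α else 1) h ≠ 0)
    (hfrob : α ^ q * MvPolynomial.aeval (fun i : Fin 2 => if i = 0 then α else 1) h
      = MvPolynomial.aeval (fun i : Fin 2 => if i = 0 then α else 1) g)
    (a b c d : F) (hdet : a * d - b * c ≠ 0)
    (β : K)
    (hβ : β = (algebraMap F K a * α + algebraMap F K b) /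
              (algebraMap F K c * α + algebraMap F K d))
    (sub : Fin 2 → MvPolynomial (Fin 2) F)
    (hsub : sub = fun i : Fin 2 =>
      if i = 0 then C d * X 0 - C b * X 1 else - (C c * X 0) + C a * X 1)
    (gt ht : MvPolynomial (Fin 2) F)
    (hgt : gt = C a * MvPolynomial.bind₁ sub g + C b * MvPolynomial.bind₁ sub h)
    (hht : ht = C c * MvPolynomial.bind₁ sub g + C d * MvPolynomial.bind₁ sub h) :
    MvPolynomial.aeval (fun i : Fin 2 => if i = 0 then β else 1) ht ≠ 0 ∧
    β ^ q * MvPolynomial.aeval (fun i : Fin 2 => if i = 0 then β else 1) ht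
      = MvPolynomial.aeval (fun i : Fin 2 => if i = 0 then β else 1) gt := by
  have hAinj : Function.Injective (algebraMap F K) := (algebraMap F K).injective
  -- char p facts
  obtain ⟨p, k, hp, hk, hpk⟩ := hq
  have hp' : p.Prime := Nat.prime_iff.mpr hp
  haveI : Fact p.Prime := ⟨hp'⟩
  haveI hcharK : CharP K p := by
    haveI := ringChar.charP K
    obtain ⟨m, _, hcard⟩ := FiniteField.card K (ringChar K)
    have hrcp : (ringChar K).Prime := CharP.char_is_prime K (ringChar K)
    have h1 : ringChar K ∣ p ^ (k * n) := by
      rw [pow_mul, hpk, ← hK, hcard]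
      exact dvd_pow_self (ringChar K) m.2.ne'
    have hpp' : ringChar K = p :=
      (Nat.prime_dvd_prime_iff_eq hrcp hp').mp (hrcp.dvd_of_dvd_pow h1)
    exact hpp' ▸ ringChar.charP K
  have hadd : ∀ x y : K, (x + y) ^ q = x ^ q + y ^ q := fun x y => by
    rw [← hpk]; exact add_pow_char_pow x y p k
  have hfix : ∀ x : F, (algebraMap F K x) ^ q = algebraMap F K x := fun x => by
    rw [← map_pow, ← hF, FiniteField.pow_card]
  -- the element α is not in the image of F
  have hnotF : ∀ x : F, α ≠ algebraMap F K x := by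
    intro x hx
    rw [hx, minpoly.eq_X_sub_C] at hα
    simp at hα
    omega
  set e : K := algebraMap F K c * α + algebraMap F K d with he_def
  have he : e ≠ 0 := by
    by_cases hc : c = 0
    · have hd : d ≠ 0 := fun h0 => hdet (by rw [hc, h0]; ring)
      have : algebraMap F K d ≠ 0 := fun h0 => hd (hAinj (by simpa using h0))
      simpa [he_def, hc] using this
    · intro h0
      have hAc : algebraMap F K c ≠ 0 := fun h1 => hc (hAinj (by simpa using h1))
      refine hnotF (-d / c) ?_
      rw [map_div₀, map_neg, eq_div_iff hAc]
      rw [he_def] at h0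
      linear_combination h0
  set u : Fin 2 → K := fun i => if i = 0 then α else 1 with hu
  set v : Fin 2 → K := fun i => if i = 0 then β else 1 with hv
  set G := aeval u g with hG
  set H := aeval u h with hH
  set t : K := algebraMap F K (a * d - b * c) / e with ht_def
  have hΔ : algebraMap F K (a * d - b * c) ≠ 0 := fun h0 => hdet (hAinj (by simpa using h0))
  have ht0 : t ≠ 0 := div_ne_zero hΔ he
  have hβe : β * e = algebraMap F K a * α + algebraMap F K b := by
    rw [hβ]; field_simp
  -- the substituted variables
  have hw : (fun i : Fin 2 => aeval v (sub i)) = fun i => t * u i := by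
    have hv0 : v 0 = β := by simp [hv]
    have hv1 : v 1 = 1 := by simp [hv]
    have hu0 : u 0 = α := by simp [hu]
    have hu1 : u 1 = 1 := by simp [hu]
    funext i
    fin_cases i
    · show aeval v (sub 0) = t * u 0
      have : aeval v (sub 0) = algebraMap F K d * β - algebraMap F K b := by
        simp [hsub, hv0, hv1]
      rw [this, hu0, ht_def, div_mul_eq_mul_div, eq_div_iff he, map_sub, map_mul, map_mul]
      linear_combination (algebraMap F K d) * hβe - (algebraMap F K b) * he_def
    · show aeval v (sub 1) = t * u 1
      have : aeval v (sub 1) = -(algebraMap F K c * β) + algebraMap F K a := by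
        simp [hsub, hv0, hv1]
      rw [this, hu1, ht_def, mul_one, eq_div_iff he, map_sub, map_mul, map_mul]
      linear_combination -(algebraMap F K c) * hβe + (algebraMap F K a) * he_def
  have hbg : aeval v (bind₁ sub g) = t ^ r * G := by
    rw [aeval_bind₁, hw]; exact aeval_mul_of_isHomogeneous hg t u
  have hbh : aeval v (bind₁ sub h) = t ^ r * H := by
    rw [aeval_bind₁, hw]; exact aeval_mul_of_isHomogeneous hh t u
  have heq : e ^ q = algebraMap F K c * α ^ q + algebraMap F K d := by
    rw [he_def, hadd, mul_pow, hfix c, hfix d]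
  have hGH : α ^ q * H = G := hfrob
  have hHt : aeval v ht = t ^ r * (e ^ q * H) := by
    rw [hht, map_add, map_mul, map_mul, aeval_C, aeval_C, hbg, hbh]
    linear_combination -(t ^ r * algebraMap F K c) * hGH - (t ^ r * H) * heq
  have heq0 : e ^ q ≠ 0 := pow_ne_zero _ he
  constructor
  · rw [hHt]
    exact mul_ne_zero (pow_ne_zero _ ht0) (mul_ne_zero heq0 hh0)
  · have hβq : β ^ q * e ^ q = algebraMap F K a * α ^ q + algebraMap F K b := by
      calc β ^ q * e ^ q = (β * e) ^ q := (mul_pow β e q).symm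
        _ = (algebraMap F K a * α + algebraMap F K b) ^ q := by rw [hβe]
        _ = (algebraMap F K a * α) ^ q + (algebraMap F K b) ^ q := hadd _ _
        _ = algebraMap F K a * α ^ q + algebraMap F K b := by
              rw [mul_pow, hfix a, hfix b]
    have hGt : aeval v gt = t ^ r * (algebraMap F K a * α ^ q + algebraMap F K b) * H := by
      rw [hgt, map_add, map_mul, map_mul, aeval_C, aeval_C, hbg, hbh]
      linear_combination -(t ^ r * algebraMap F K a) * hGH
    rw [hHt, hGt]
    linear_combination (t ^ r * H) * hβq
end

section
/- Let k be a finite field and let r ≥ 1. Let p ∈ k[x,y] be a monic homogeneous polynomial of degree r+1 that is not divisible by y (monic means p(x,1) is monic as a univariate polynomial). Suppose g, h ∈ k[x,y] are coprime homogeneous polynomials with h monic of degree r and g of degree at most r, and suppose x·h − y·g = c·p for some c ∈ k^×. Then c = 1, h is coprime to y·p, and g = (x·h − p)/y. -/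
/-!
Compare the coefficients of `x^(r+1)` in `x·h − y·g = c·p`: the `y·g` term contributes nothing,
so `h[x^r] = c · p[x^(r+1)]`. For a homogeneous polynomial of degree `n`, the coefficient of `x^n`
is the coefficient of `X^n` in its dehomogenization, which has degree at most `n`; so if that
coefficient is nonzero and the polynomial is monic, it equals `1`. Since `y ∤ p` it is nonzero
for `p`, hence `h[x^r] = c ≠ 0`, and monicity of `h` forces `c = 1`. Finally `y ∤ h` (else `y ∣ p`),
and `p = x·h − y·g` is coprime to `h` because `y·g` is.
-/

open MvPolynomial

/-- The dehomogenization of a bivariate polynomial: set `y = 1`. -/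
noncomputable def dehom {k : Type*} [CommSemiring k] (p : MvPolynomial (Fin 2) k) :
    Polynomial k :=
  MvPolynomial.aeval (fun i : Fin 2 => if i = 0 then Polynomial.X else 1) p

/-- A homogeneous polynomial `p ∈ k[x,y]` is monic if `p(x,1)` is monic. -/
def MonicHom {k : Type*} [CommSemiring k] (p : MvPolynomial (Fin 2) k) : Prop :=
  (dehom p).Monic

namespace MvPolynomial

section CommSemiring

variable {R : Type*} [CommSemiring R] {n : ℕ} {q : MvPolynomial (Fin 2) R}

theorem IsHomogeneous.apply_zero_add_apply_one (hq : q.IsHomogeneous n) {d : Fin 2 →₀ ℕ}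
    (hd : q.coeff d ≠ 0) : d 0 + d 1 = n := by
  rw [← hq hd]
  change d 0 + d 1 = Finsupp.weight (fun _ => 1) d
  rw [← Finsupp.degree_eq_weight_one, Finsupp.degree_eq_sum, Fin.sum_univ_two]

theorem IsHomogeneous.eq_single_zero (hq : q.IsHomogeneous n) {d : Fin 2 →₀ ℕ}
    (hd : q.coeff d ≠ 0) (h1 : d 1 = 0) : d = Finsupp.single 0 n := by
  have h0 : d 0 = n := by have := hq.apply_zero_add_apply_one hd; omega
  ext i
  fin_cases i <;> simp [h0, h1]

theorem coeff_dehom (q : MvPolynomial (Fin 2) R) (m : ℕ) :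
    (dehom q).coeff m = ∑ d ∈ q.support, if m = d 0 then q.coeff d else 0 := by
  simp only [dehom, aeval_def, eval₂_eq', Fin.prod_univ_two, Polynomial.finsetSum_coeff]
  refine Finset.sum_congr rfl fun d _ => ?_
  simp [Polynomial.algebraMap_eq, Polynomial.coeff_C_mul, Polynomial.coeff_X_pow]

theorem IsHomogeneous.natDegree_dehom_le (hq : q.IsHomogeneous n) :
    (dehom q).natDegree ≤ n := by
  refine Polynomial.natDegree_le_iff_coeff_eq_zero.mpr fun m hm => ?_
  refine (coeff_dehom q m).trans (Finset.sum_eq_zero fun d hd => if_neg ?_)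
  have := hq.apply_zero_add_apply_one (mem_support_iff.mp hd)
  omega

theorem IsHomogeneous.coeff_dehom_self (hq : q.IsHomogeneous n) :
    (dehom q).coeff n = q.coeff (Finsupp.single 0 n) := by
  rw [coeff_dehom, Finset.sum_eq_single (Finsupp.single 0 n)]
  · simp
  · intro d hd hne
    refine if_neg fun h => hne (hq.eq_single_zero (mem_support_iff.mp hd) ?_)
    have := hq.apply_zero_add_apply_one (mem_support_iff.mp hd)
    omega
  · intro hns
    simp [notMem_support_iff.mp hns]

theorem IsHomogeneous.coeff_single_zero_eq_one (hq : q.IsHomogeneous n) (hm : MonicHom q)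
    (h0 : q.coeff (Finsupp.single 0 n) ≠ 0) : q.coeff (Finsupp.single 0 n) = 1 := by
  have hdeg : (dehom q).natDegree = n :=
    le_antisymm hq.natDegree_dehom_le
      (Polynomial.le_natDegree_of_ne_zero (hq.coeff_dehom_self ▸ h0))
  rw [← hq.coeff_dehom_self, ← hdeg]
  exact hm.coeff_natDegree

theorem IsHomogeneous.coeff_single_zero_ne_zero (hq : q.IsHomogeneous n) (hy : ¬ X 1 ∣ q) :
    q.coeff (Finsupp.single 0 n) ≠ 0 := by
  refine fun h0 => hy ?_
  rw [q.as_sum]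
  refine Finset.dvd_sum fun d hd => X_dvd_monomial.mpr (Or.inr fun h1 => ?_)
  exact mem_support_iff.mp hd (hq.eq_single_zero (mem_support_iff.mp hd) h1 ▸ h0)

end CommSemiring

theorem coeff_single_zero_succ_X_zero_mul_sub_X_one_mul {R : Type*} [CommRing R] (n : ℕ)
    (h g : MvPolynomial (Fin 2) R) :
    coeff (Finsupp.single 0 (n + 1)) (X 0 * h - X 1 * g) = coeff (Finsupp.single 0 n) h := by
  rw [coeff_sub, add_comm, Finsupp.single_add, coeff_X_mul, coeff_X_mul', if_neg, sub_zero]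
  simp

end MvPolynomial

theorem stmt_4_general (k : Type*) [Field k] (r : ℕ)
    (p : MvPolynomial (Fin 2) k) (hp : p.IsHomogeneous (r + 1)) (hpm : MonicHom p)
    (hpy : ¬ (X 1 ∣ p))
    (g h : MvPolynomial (Fin 2) k)
    (hh : h.IsHomogeneous r) (hhm : MonicHom h)
    (hcop : IsRelPrime g h)
    (c : k) (hc : c ≠ 0)
    (heq : X 0 * h - X 1 * g = C c * p) :
    c = 1 ∧ IsRelPrime h (X 1 * p) ∧ X 1 * g = X 0 * h - p := by
  have hp1 : p.coeff (Finsupp.single 0 (r + 1)) = 1 :=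
    hp.coeff_single_zero_eq_one hpm (hp.coeff_single_zero_ne_zero hpy)
  have hhc : h.coeff (Finsupp.single 0 r) = c := by
    have := congrArg (coeff (Finsupp.single 0 (r + 1))) heq
    rwa [coeff_single_zero_succ_X_zero_mul_sub_X_one_mul, coeff_C_mul, hp1, mul_one] at this
  obtain rfl : c = 1 := hhc ▸ hh.coeff_single_zero_eq_one hhm (hhc ▸ hc)
  rw [C_1, one_mul] at heq
  have hyh : ¬ X 1 ∣ h := fun hd => hpy (heq ▸ dvd_sub (hd.mul_left _) (dvd_mul_right _ _))
  have hhy : IsRelPrime h (X 1) := (X_prime.irreducible.isRelPrime_iff_not_dvd.mpr hyh).symm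
  have hhp : IsRelPrime h p :=
    heq ▸ IsRelPrime.mul_sub_right_right_iff.mpr (hhy.mul_right hcop.symm)
  exact ⟨rfl, hhy.mul_right hhp, by rw [← heq]; ring⟩

/-- forward direction of the first case of Proposition 2.6 of the
paper.  If `p` is monic homogeneous of degree `r+1`, not divisible by `y`, and
`x·h − y·g = c·p` with `g, h` coprime, `h` monic homogeneous of degree `r` and `g`
homogeneous of degree at most `r`, then `c = 1`, `h` is coprime to `y·p`, and
`g = (x·h − p)/y`. -/
theorem stmt_4 (k : Type*) [Field k] [Fintype k] (r : ℕ) (hr : 1 ≤ r)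
    (p : MvPolynomial (Fin 2) k) (hp : p.IsHomogeneous (r + 1)) (hpm : MonicHom p)
    (hpy : ¬ (X 1 ∣ p))
    (g h : MvPolynomial (Fin 2) k)
    (hh : h.IsHomogeneous r) (hhm : MonicHom h)
    (hgdeg : ∃ s ≤ r, g.IsHomogeneous s)
    (hcop : IsRelPrime g h)
    (c : k) (hc : c ≠ 0)
    (heq : X 0 * h - X 1 * g = C c * p) :
    c = 1 ∧ IsRelPrime h (X 1 * p) ∧ X 1 * g = X 0 * h - p :=
  stmt_4_general k r p hp hpm hpy g h hh hhm hcop c hc heq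
end

section
/- Let k be a finite field and let r ≥ 1. Let p ∈ k[x,y] be a monic homogeneous polynomial of degree r+1 that is divisible by y (monic means p(x,1) is monic as a univariate polynomial). (1) If g, h ∈ k[x,y] are coprime homogeneous polynomials with h monic of degree r and g of degree at most r, and x·h − y·g = c·p for some c ∈ k^×, then the greatest common divisor of h and p is (an associate of) y, and c·p ≢ x·h (mod y²). (2) Conversely, if h ∈ k[x,y] is monic homogeneous of degree r whose greatest common divisor with p is y, and c ∈ k^× satisfies c·p ≢ x·h (mod y²), then y divides x·h − c·p, the quotient g := (x·h − c·p)/y is homogeneous of degree r, not divisible by y, coprime to h, and satisfies x·h − y·g = c·p. -/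
open MvPolynomial

/-!
Everything is divisibility in `k[x,y]` with `y` prime and `y ∤ x`. If `x·h − y·g = c·p` and
`y ∣ p`, then `y ∣ x·h`, so `y ∣ h`; a common divisor of `h` and `p` divides `y·g` and, being
coprime to `g`, divides `y`; and `c·p − x·h = −y·g` is divisible by `y²` exactly when `y ∣ g`,
which coprimality with `h` forbids. Conversely, writing `h = y·h₁` and `p = y·p₁`, the quotient
is `g = x·h₁ − c·p₁`, and a common divisor of `g` and `h` divides `p`, hence `y`, and is a unit
because `y ∤ g`.
-/

theorem MvPolynomial.IsHomogeneous.of_X_mul {σ R : Type*} [CommSemiring R] {i : σ}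
    {g : MvPolynomial σ R} {n : ℕ} (h : (X i * g).IsHomogeneous (n + 1)) :
    g.IsHomogeneous n := by
  intro d hd
  have hdeg := h (d := Finsupp.single i 1 + d) (by rwa [coeff_X_mul])
  rw [map_add, Finsupp.weight_single, Pi.one_apply, smul_eq_mul, mul_one] at hdeg
  omega

section FixedPointDivisor

variable {R : Type*} [CommRing R] {x y p h g u : R}

theorem dvd_of_mul_sub_mul_eq (hy : Prime y) (hx : ¬ y ∣ x) (hp : y ∣ p)
    (heq : x * h - y * g = u * p) : y ∣ h := by
  have hxh : y ∣ x * h := by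
    rw [show x * h = u * p + y * g by linear_combination heq]
    exact dvd_add (hp.mul_left u) (dvd_mul_right y g)
  exact (hy.dvd_mul.mp hxh).resolve_left hx

theorem dvd_of_dvd_of_dvd_of_mul_sub_mul_eq [DecompositionMonoid R] (hgh : IsRelPrime g h)
    (heq : x * h - y * g = u * p) {d : R} (hdh : d ∣ h) (hdp : d ∣ p) : d ∣ y := by
  have hdyg : d ∣ y * g := by
    rw [show y * g = x * h - u * p by linear_combination -heq]
    exact dvd_sub (hdh.mul_left x) (hdp.mul_left u)
  have hdg : IsRelPrime d g := fun e hed heg => hgh heg (hed.trans hdh)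
  exact hdg.dvd_of_dvd_mul_right hdyg

theorem sq_dvd_sub_iff_dvd [IsDomain R] (hy : y ≠ 0) (heq : x * h - y * g = u * p) :
    y ^ 2 ∣ u * p - x * h ↔ y ∣ g := by
  rw [show u * p - x * h = -(y * g) by linear_combination -heq, dvd_neg, sq,
    mul_dvd_mul_iff_left hy]

theorem isRelPrime_of_mul_sub_mul_eq (hy : Irreducible y) (hu : IsUnit u)
    (heq : x * h - y * g = u * p) (hg : ¬ y ∣ g)
    (hgcd : ∀ d : R, d ∣ h → d ∣ p → d ∣ y) : IsRelPrime g h := by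
  intro d hdg hdh
  have hdp : d ∣ p := by
    rw [← hu.dvd_mul_left, show u * p = x * h - y * g by linear_combination -heq]
    exact dvd_sub (hdh.mul_left x) (hdg.mul_left y)
  exact (hy.isRelPrime_iff_not_dvd.mpr hg) (hgcd d hdh hdp) hdg

end FixedPointDivisor

theorem stmt_6_general (k : Type*) [Field k] (r : ℕ)
    (p : MvPolynomial (Fin 2) k) (hp : p.IsHomogeneous (r + 1))
    (hpy : X 1 ∣ p) :
    (∀ g h : MvPolynomial (Fin 2) k, h.IsHomogeneous r → MonicHom h →
      (∃ s ≤ r, g.IsHomogeneous s) → IsRelPrime g h →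
      ∀ c : k, c ≠ 0 → X 0 * h - X 1 * g = C c * p →
        (X 1 ∣ h ∧ (∀ d : MvPolynomial (Fin 2) k, d ∣ h → d ∣ p → d ∣ X 1) ∧
          ¬ (X 1 ^ 2 ∣ (C c * p - X 0 * h))))
    ∧
    (∀ h : MvPolynomial (Fin 2) k, h.IsHomogeneous r → MonicHom h →
      X 1 ∣ h → (∀ d : MvPolynomial (Fin 2) k, d ∣ h → d ∣ p → d ∣ X 1) →
      ∀ c : k, c ≠ 0 → ¬ (X 1 ^ 2 ∣ (C c * p - X 0 * h)) →
        ∃ g : MvPolynomial (Fin 2) k,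
          X 0 * h - C c * p = X 1 * g ∧ g.IsHomogeneous r ∧ ¬ (X 1 ∣ g) ∧
          IsRelPrime g h ∧ X 0 * h - X 1 * g = C c * p) := by
  have hy : Prime (X 1 : MvPolynomial (Fin 2) k) := X_prime
  have hx : ¬ (X 1 : MvPolynomial (Fin 2) k) ∣ X 0 := by simp
  refine ⟨fun g h _ _ _ hgh c _ heq => ?_, fun h hh _ hyh hgcd c hc hnsq => ?_⟩
  · have hyh := dvd_of_mul_sub_mul_eq hy hx hpy heq
    refine ⟨hyh, fun d => dvd_of_dvd_of_dvd_of_mul_sub_mul_eq hgh heq, fun hsq => ?_⟩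
    exact hy.not_isUnit (hgh ((sq_dvd_sub_iff_dvd hy.ne_zero heq).mp hsq) hyh)
  · obtain ⟨h₁, rfl⟩ := hyh
    obtain ⟨p₁, rfl⟩ := hpy
    have heq : X 0 * (X 1 * h₁) - X 1 * (X 0 * h₁ - C c * p₁) = C c * (X 1 * p₁) := by ring
    have hg : ¬ X 1 ∣ X 0 * h₁ - C c * p₁ := (sq_dvd_sub_iff_dvd hy.ne_zero heq).not.mp hnsq
    refine ⟨X 0 * h₁ - C c * p₁, by linear_combination heq, ?_, hg,
      isRelPrime_of_mul_sub_mul_eq hy.irreducible (hc.isUnit.map C) heq hg hgcd, heq⟩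
    refine IsHomogeneous.of_X_mul (i := 1) ?_
    rw [show X 1 * (X 0 * h₁ - C c * p₁) = X 0 * (X 1 * h₁) - C c * (X 1 * p₁) by ring]
    exact (add_comm r 1 ▸ (isHomogeneous_X k 0).mul hh).sub (hp.C_mul c)

/-- second case of Proposition 2.6 of the paper: `p` monic
homogeneous of degree `r+1`, divisible by `y`.
(1) If `x·h − y·g = c·p` with `g, h` coprime, `h` monic homogeneous of degree `r`,
`g` homogeneous of degree at most `r`, and `c ≠ 0`, then `gcd(h,p)` is an associate
of `y` and `c·p ≢ x·h (mod y²)`.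
(2) Conversely, if `h` is monic homogeneous of degree `r` with `gcd(h,p) = y` and
`c ≠ 0` with `c·p ≢ x·h (mod y²)`, then `y ∣ x·h − c·p` and the quotient `g` is
homogeneous of degree `r`, not divisible by `y`, coprime to `h`, with
`x·h − y·g = c·p`. -/
theorem stmt_6 (k : Type*) [Field k] [Fintype k] (r : ℕ) (hr : 1 ≤ r)
    (p : MvPolynomial (Fin 2) k) (hp : p.IsHomogeneous (r + 1)) (hpm : MonicHom p)
    (hpy : X 1 ∣ p) :
    (∀ g h : MvPolynomial (Fin 2) k, h.IsHomogeneous r → MonicHom h →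
      (∃ s ≤ r, g.IsHomogeneous s) → IsRelPrime g h →
      ∀ c : k, c ≠ 0 → X 0 * h - X 1 * g = C c * p →
        (X 1 ∣ h ∧ (∀ d : MvPolynomial (Fin 2) k, d ∣ h → d ∣ p → d ∣ X 1) ∧
          ¬ (X 1 ^ 2 ∣ (C c * p - X 0 * h))))
    ∧
    (∀ h : MvPolynomial (Fin 2) k, h.IsHomogeneous r → MonicHom h →
      X 1 ∣ h → (∀ d : MvPolynomial (Fin 2) k, d ∣ h → d ∣ p → d ∣ X 1) →
      ∀ c : k, c ≠ 0 → ¬ (X 1 ^ 2 ∣ (C c * p - X 0 * h)) →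
        ∃ g : MvPolynomial (Fin 2) k,
          X 0 * h - C c * p = X 1 * g ∧ g.IsHomogeneous r ∧ ¬ (X 1 ∣ g) ∧
          IsRelPrime g h ∧ X 0 * h - X 1 * g = C c * p) :=
  stmt_6_general k r p hp hpy
end

section
/- Let q be a prime power, let r ≥ 1, and let p ∈ F_q[x,y] be a monic homogeneous polynomial of degree r+1. Then the set of pairs (g, h), where h ∈ F_q[x,y] is monic homogeneous of degree r, g ∈ F_q[x,y] is homogeneous of degree at most r, g and h are coprime, and x·h − y·g = c·p for some c ∈ F_q^×, has cardinality at most q^r. -/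
open MvPolynomial

/-!
A homogeneous `h` of degree `r` is determined by `h(x,1)`, and `x·h − y·g = c·p` determines `g`
from `h` and `c`. Comparing `x^(r+1)`-coefficients gives `[x^r] h = c·b` with `b = [x^(r+1)] p`.
So `(g, h) ↦ (c·[x^i] h(x,1))_{i<r} ∈ F^r` is injective: if `b ≠ 0` then `h(x,1)` has degree `r`,
so `c = b⁻¹` is forced; if `b = 0` the vector is all of `c·h(x,1)`, whose leading coefficient is `c`.
-/

section Dehomogenization

variable {R : Type*} [CommSemiring R]

lemma coeff_dehom (f : MvPolynomial (Fin 2) R) (i : ℕ) :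
    (dehom f).coeff i = ∑ e ∈ f.support with e 0 = i, coeff e f := by
  conv_lhs => rw [f.as_sum, dehom, map_sum, Polynomial.finsetSum_coeff]
  simp [aeval_monomial, Finsupp.prod_fintype, Finset.sum_filter, eq_comm]

variable {f g : MvPolynomial (Fin 2) R} {n : ℕ}

theorem MvPolynomial.IsHomogeneous.add_eq_of_mem_support (hf : f.IsHomogeneous n)
    {e : Fin 2 →₀ ℕ} (he : e ∈ f.support) : e 0 + e 1 = n := by
  rw [← Fin.sum_univ_two (f := e), ← Finsupp.degree_eq_sum]
  simpa [Finsupp.degree_eq_weight_one, Pi.one_def] using hf (mem_support_iff.mp he)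

theorem MvPolynomial.IsHomogeneous.coeff_dehom (hf : f.IsHomogeneous n) {d : Fin 2 →₀ ℕ}
    (hd : d.degree = n) : (dehom f).coeff (d 0) = coeff d f := by
  rw [Finsupp.degree_eq_sum, Fin.sum_univ_two] at hd
  rw [_root_.coeff_dehom, Finset.sum_eq_single d]
  · rintro e he hne
    obtain ⟨he, he0⟩ := Finset.mem_filter.mp he
    have he' := hf.add_eq_of_mem_support he
    refine absurd (Finsupp.ext fun j => ?_) hne
    fin_cases j
    · exact he0
    · change e 1 = d 1
      omega
  · intro hd'
    simpa using hd'

theorem MvPolynomial.IsHomogeneous.coeff_dehom_of_lt (hf : f.IsHomogeneous n) {i : ℕ}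
    (hi : n < i) : (dehom f).coeff i = 0 := by
  rw [_root_.coeff_dehom]
  refine Finset.sum_eq_zero fun e he => absurd (Finset.mem_filter.mp he).2 ?_
  have he' := hf.add_eq_of_mem_support (Finset.mem_filter.mp he).1
  omega

theorem MvPolynomial.IsHomogeneous.natDegree_dehom_le_s7 (hf : f.IsHomogeneous n) :
    (dehom f).natDegree ≤ n :=
  Polynomial.natDegree_le_iff_coeff_eq_zero.mpr fun _ hi => hf.coeff_dehom_of_lt hi

theorem MvPolynomial.IsHomogeneous.eq_of_dehom_eq (hf : f.IsHomogeneous n)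
    (hg : g.IsHomogeneous n) (h : dehom f = dehom g) : f = g := by
  ext d
  by_cases hd : d.degree = n
  · rw [← hf.coeff_dehom hd, ← hg.coeff_dehom hd, h]
  · rw [hf.coeff_eq_zero hd, hg.coeff_eq_zero hd]

end Dehomogenization

lemma coeff_dehom_eq_of_X_mul_sub_X_mul_eq {R : Type*} [CommRing R]
    {g h p : MvPolynomial (Fin 2) R} {c : R} {r : ℕ} (hh : h.IsHomogeneous r)
    (E : X 0 * h - X 1 * g = C c * p) :
    (dehom h).coeff r = c * coeff (Finsupp.single 0 (r + 1)) p := by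
  classical
  have := congrArg (coeff (Finsupp.single 0 (r + 1))) E
  rw [coeff_sub, coeff_C_mul, Nat.add_comm, Finsupp.single_add, coeff_X_mul,
    coeff_X_mul', if_neg (by simp), sub_zero, ← Finsupp.single_add, Nat.add_comm] at this
  simpa [this] using hh.coeff_dehom (d := Finsupp.single 0 r) (by simp)

theorem Polynomial.Monic.coeff_eq_one_of_ne_zero {R : Type*} [Semiring R] {P : Polynomial R}
    {r : ℕ} (hP : P.Monic) (hr : P.natDegree ≤ r) (h : P.coeff r ≠ 0) : P.coeff r = 1 := by
  rw [← natDegree_eq_of_le_of_coeff_ne_zero hr h]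
  exact hP

theorem Polynomial.Monic.eq_of_coeff_mul_eq {R : Type*} [CommRing R] [IsDomain R]
    {P Q : Polynomial R} {b c d : R} {r : ℕ} (hP : P.Monic) (hQ : Q.Monic)
    (hPr : P.natDegree ≤ r) (hQr : Q.natDegree ≤ r) (hc : c ≠ 0) (hd : d ≠ 0)
    (hPb : P.coeff r = c * b) (hQb : Q.coeff r = d * b)
    (hlow : ∀ i < r, c * P.coeff i = d * Q.coeff i) : c = d ∧ P = Q := by
  have hcd : c = d := by
    by_cases hb : b = 0
    · have hCPQ : Polynomial.C c * P = Polynomial.C d * Q := by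
        ext i
        simp only [coeff_C_mul]
        rcases lt_trichotomy i r with hi | rfl | hi
        · exact hlow i hi
        · simp [hPb, hQb, hb]
        · rw [coeff_eq_zero_of_natDegree_lt (hPr.trans_lt hi),
            coeff_eq_zero_of_natDegree_lt (hQr.trans_lt hi), mul_zero, mul_zero]
      simpa [hP.leadingCoeff, hQ.leadingCoeff] using congrArg Polynomial.leadingCoeff hCPQ
    · have hP1 := hP.coeff_eq_one_of_ne_zero hPr (hPb ▸ mul_ne_zero hc hb)
      have hQ1 := hQ.coeff_eq_one_of_ne_zero hQr (hQb ▸ mul_ne_zero hd hb)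
      rw [hPb] at hP1
      rw [hQb] at hQ1
      exact mul_right_cancel₀ hb (hP1.trans hQ1.symm)
  subst hcd
  refine ⟨rfl, ext fun i => ?_⟩
  rcases lt_trichotomy i r with hi | rfl | hi
  · exact mul_left_cancel₀ hc (hlow i hi)
  · rw [hPb, hQb]
  · rw [coeff_eq_zero_of_natDegree_lt (hPr.trans_lt hi),
      coeff_eq_zero_of_natDegree_lt (hQr.trans_lt hi)]

lemma Set.finite_and_ncard_le_of_injective {α β : Type*} [Finite β] {S : Set α} (f : S → β)
    (hf : Function.Injective f) : S.Finite ∧ S.ncard ≤ Nat.card β := by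
  have : Finite S := Finite.of_injective f hf
  exact ⟨S.toFinite, Nat.card_coe_set_eq S ▸ Nat.card_le_card_of_injective f hf⟩

theorem stmt_7_general (q r : ℕ)
    (F : Type*) [Field F] [Fintype F] (hF : Fintype.card F = q)
    (p : MvPolynomial (Fin 2) F)
    (S : Set (MvPolynomial (Fin 2) F × MvPolynomial (Fin 2) F))
    (hS : S = {gh | gh.2.IsHomogeneous r ∧ MonicHom gh.2 ∧
      (∃ s ≤ r, gh.1.IsHomogeneous s) ∧ IsRelPrime gh.1 gh.2 ∧
      ∃ c : F, c ≠ 0 ∧ X 0 * gh.2 - X 1 * gh.1 = C c * p}) :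
    S.Finite ∧ S.ncard ≤ q ^ r := by
  have hmem : ∀ x : S, x.1.2.IsHomogeneous r ∧ MonicHom x.1.2 ∧
      ∃ c : F, c ≠ 0 ∧ X 0 * x.1.2 - X 1 * x.1.1 = C c * p := by
    rintro ⟨gh, hgh⟩
    rw [hS] at hgh
    exact ⟨hgh.1, hgh.2.1, hgh.2.2.2.2⟩
  choose hhom hmonic c hc hE using hmem
  have hinj : Function.Injective fun (x : S) (i : Fin r) => c x * (dehom x.1.2).coeff i := by
    intro x y hxy
    obtain ⟨hcxy, hdehom⟩ := Polynomial.Monic.eq_of_coeff_mul_eq (hmonic x) (hmonic y)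
      (hhom x).natDegree_dehom_le_s7 (hhom y).natDegree_dehom_le_s7 (hc x) (hc y)
      (coeff_dehom_eq_of_X_mul_sub_X_mul_eq (hhom x) (hE x))
      (coeff_dehom_eq_of_X_mul_sub_X_mul_eq (hhom y) (hE y)) fun i hi => congrFun hxy ⟨i, hi⟩
    have hh := (hhom x).eq_of_dehom_eq (hhom y) hdehom
    have hg : x.1.1 = y.1.1 := by
      have E := (hE x).trans ((congrArg (C · * p) hcxy).trans (hE y).symm)
      rw [hh, sub_right_inj] at E
      exact mul_left_cancel₀ (X_ne_zero 1) E
    exact Subtype.ext (Prod.ext hg hh)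
  simpa [Nat.card_eq_fintype_card, hF] using Set.finite_and_ncard_le_of_injective _ hinj

/-- Corollary 2.7 of the paper.  For `p` monic homogeneous of
degree `r+1` over `F_q`, the set of coprime pairs `(g,h)` with `h` monic
homogeneous of degree `r`, `g` homogeneous of degree at most `r`, and
`x·h − y·g = c·p` for some `c ∈ F_q^×`, is finite with at most `q^r` elements. -/
theorem stmt_7 (q r : ℕ) (hq : IsPrimePow q) (hr : 1 ≤ r)
    (F : Type*) [Field F] [Fintype F] (hF : Fintype.card F = q)
    (p : MvPolynomial (Fin 2) F) (hp : p.IsHomogeneous (r + 1)) (hpm : MonicHom p)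
    (S : Set (MvPolynomial (Fin 2) F × MvPolynomial (Fin 2) F))
    (hS : S = {gh | gh.2.IsHomogeneous r ∧ MonicHom gh.2 ∧
      (∃ s ≤ r, gh.1.IsHomogeneous s) ∧ IsRelPrime gh.1 gh.2 ∧
      ∃ c : F, c ≠ 0 ∧ X 0 * gh.2 - X 1 * gh.1 = C c * p}) :
    S.Finite ∧ S.ncard ≤ q ^ r :=
  stmt_7_general q r F hF p S hS
end

section
/- Let q be a prime power, let n ≥ 1, and let g, h ∈ F_q[x,y] be coprime homogeneous polynomials of the same degree r ≥ 1. Since g and h are coprime, they have no common zero on the projective line over an algebraic closure of F_q, so the rule φ([x : y]) = [g(x,y) : h(x,y)] defines a self-map φ of the projective line P¹ over the algebraic closure of F_q. If α ∈ F_{q^n} satisfies φ([α : 1]) = [α^q : 1], then the n-fold iterate φ^(n) of φ satisfies φ^(n)([α : 1]) = [α : 1]; that is, [α : 1] is a fixed point of φ^(n). -/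
open MvPolynomial

private lemma aeval_hom_comm {F K : Type*} [Field F] [Field K] [Algebra F K]
    (σ : K →+* K) (hσ : ∀ a : F, σ (algebraMap F K a) = algebraMap F K a)
    (φ : MvPolynomial (Fin 2) F) (v : Fin 2 → K) :
    σ (MvPolynomial.aeval v φ) = MvPolynomial.aeval (σ ∘ v) φ := by
  rw [aeval_def, aeval_def, eval₂_comp_left σ]
  congr 1
  ext a
  simp [hσ]

private lemma aeval_scale {F K : Type*} [Field F] [Field K] [Algebra F K]
    {r : ℕ} (φ : MvPolynomial (Fin 2) F) (hφ : φ.IsHomogeneous r)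
    (c : K) (v : Fin 2 → K) :
    MvPolynomial.aeval (fun i => c * v i) φ = c ^ r * MvPolynomial.aeval v φ := by
  rw [aeval_def, aeval_def, eval₂_eq, eval₂_eq, Finset.mul_sum]
  apply Finset.sum_congr rfl
  intro d hd
  have hdeg : ∑ i ∈ d.support, d i = r := by
    have := hφ (mem_support_iff.mp hd)
    simpa [Finsupp.weight_apply, Finsupp.sum] using this
  rw [Finset.prod_congr rfl (fun i _ => mul_pow c (v i) (d i)),
    Finset.prod_mul_distrib, Finset.prod_pow_eq_pow_sum, hdeg]
  ring

/-- Theorem 2.8 of the paper.  Let `g, h ∈ F_q[x,y]` be coprime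
homogeneous polynomials of degree `r ≥ 1`, defining in coordinates the self-map
`Φ(x,y) = (g(x,y), h(x,y))` of the projective line over the algebraic closure `K`
of `F_q`.  If `α ∈ F_{q^n}` (i.e. `α^{q^n} = α`) satisfies
`φ([α : 1]) = [α^q : 1]`, then `[α : 1]` is a fixed point of the `n`-fold iterate
`φ^(n)`.  Projective points are represented by pairs of coordinates, equality of
projective points being equality up to a nonzero scalar. -/
theorem stmt_8 (q n r : ℕ) (hq : IsPrimePow q) (hn : 1 ≤ n) (hr : 1 ≤ r)
    (F K : Type*) [Field F] [Fintype F] (hF : Fintype.card F = q)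
    [Field K] [Algebra F K] [IsAlgClosure F K]
    (g h : MvPolynomial (Fin 2) F) (hg : g.IsHomogeneous r) (hh : h.IsHomogeneous r)
    (hcop : IsRelPrime g h)
    (Φ : K × K → K × K)
    (hΦ : ∀ P : K × K,
      Φ P = (MvPolynomial.aeval (fun i : Fin 2 => if i = 0 then P.1 else P.2) g,
             MvPolynomial.aeval (fun i : Fin 2 => if i = 0 then P.1 else P.2) h))
    (α : K) (hα : α ^ q ^ n = α)
    (hfix : ∃ c : K, c ≠ 0 ∧ Φ (α, 1) = (c * α ^ q, c)) :
    ∃ c : K, c ≠ 0 ∧ Φ^[n] (α, 1) = (c * α, c) := by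
  obtain ⟨c, hc, hΦα⟩ := hfix
  -- set up characteristic
  set p := ringChar F with hp'
  haveI : CharP F p := ringChar.charP F
  obtain ⟨e, hp, hcard⟩ := FiniteField.card F p
  haveI : Fact p.Prime := ⟨hp⟩
  haveI : CharP K p := charP_of_injective_algebraMap (algebraMap F K).injective p
  have hqpe : q = p ^ (e : ℕ) := hF ▸ hcard
  -- the q^k-power ring hom on K
  have key : ∀ k : ℕ, ∃ ck : K, ck ≠ 0 ∧ Φ^[k] (α, 1) = (ck * α ^ q ^ k, ck) := by
    intro k
    induction k with
    | zero => exact ⟨1, one_ne_zero, by simp⟩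
    | succ k ih =>
      obtain ⟨ck, hck, hk⟩ := ih
      set σ : K →+* K := iterateFrobenius K p (e * k) with hσ'
      have hσ : ∀ x : K, σ x = x ^ q ^ k := by
        intro x
        rw [hσ', iterateFrobenius_def, hqpe, ← pow_mul]
      have hσF : ∀ a : F, σ (algebraMap F K a) = algebraMap F K a := by
        intro a
        rw [hσ, ← map_pow]
        congr 1
        rw [← hF]
        exact FiniteField.pow_card_pow k a
      have hv : (fun i : Fin 2 => if i = 0 then ck * α ^ q ^ k else ck)
          = fun i => ck * (σ (if i = (0 : Fin 2) then α else 1)) := by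
        funext i
        by_cases hi : i = 0 <;> simp [hi, hσ]
      have haev : ∀ φ : MvPolynomial (Fin 2) F, φ.IsHomogeneous r →
          MvPolynomial.aeval (fun i : Fin 2 => if i = 0 then ck * α ^ q ^ k else ck) φ
            = ck ^ r * σ (MvPolynomial.aeval (fun i : Fin 2 => if i = 0 then α else (1:K)) φ) := by
        intro φ hφ
        rw [hv, aeval_scale φ hφ, aeval_hom_comm σ hσF]
        rfl
      have hΦfst : MvPolynomial.aeval (fun i : Fin 2 => if i = 0 then α else (1:K)) g
          = c * α ^ q := by
        have := hΦ (α, 1); rw [hΦα] at this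
        exact (congrArg Prod.fst this).symm
      have hΦsnd : MvPolynomial.aeval (fun i : Fin 2 => if i = 0 then α else (1:K)) h = c := by
        have := hΦ (α, 1); rw [hΦα] at this
        exact (congrArg Prod.snd this).symm
      refine ⟨ck ^ r * c ^ q ^ k, mul_ne_zero (pow_ne_zero _ hck) (pow_ne_zero _ hc), ?_⟩
      rw [Function.iterate_succ_apply', hk, hΦ]
      simp only
      rw [haev g hg, haev h hh, hΦfst, hΦsnd, map_mul, hσ, hσ, ← pow_mul, pow_succ']
      exact Prod.ext (by ring) rfl
  obtain ⟨cn, hcn, hkn⟩ := key n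
  exact ⟨cn, hcn, by rwa [hα] at hkn⟩
end

section
/- Let q be a power of a prime p and let n > 1 be an odd integer. Suppose α is an element of an algebraic closure of F_q whose minimal polynomial over F_q has degree n, and suppose there exist a, b, c, d ∈ F_q with ad − bc ≠ 0 and cα + d ≠ 0 such that α^q = (aα + b)/(cα + d). Then n = p, or n divides q − 1, or n divides q + 1. -/
open Polynomial IntermediateField

/-- The pair `(e_k, f_k)` such that `X^k ≡ e_k X + f_k  (mod X^2 - t X + D)`. -/
private def ef {F : Type*} [Field F] (t D : F) : ℕ → F × F
  | 0 => (0, 1)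
  | (k+1) => ((ef t D k).1 * t + (ef t D k).2, -((ef t D k).1 * D))

private lemma ef_map {F K : Type*} [Field F] [Field K] (φ : F →+* K) (t D : F) (k : ℕ) :
    φ (ef t D k).1 = (ef (φ t) (φ D) k).1 ∧ φ (ef t D k).2 = (ef (φ t) (φ D) k).2 := by
  induction k with
  | zero => simp [ef]
  | succ k ih => simp [ef, ih.1, ih.2]

private lemma ef_root {K : Type*} [Field K] (t D lam : K) (h : lam ^ 2 = t * lam - D) (k : ℕ) :
    lam ^ k = (ef t D k).1 * lam + (ef t D k).2 := by
  induction k with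
  | zero => simp [ef]
  | succ k ih =>
      have h1 : lam ^ (k+1) = ((ef t D k).1 * lam + (ef t D k).2) * lam := by
        rw [pow_succ, ih]
      rw [h1]
      show _ = (ef t D (k+1)).1 * lam + (ef t D (k+1)).2
      simp only [ef]
      linear_combination (ef t D k).1 * h

private lemma ef_rep {F : Type*} [Field F] (l : F) (k : ℕ) :
    (ef (2*l) (l^2) k).1 * l = (k : F) * l ^ k ∧
    (ef (2*l) (l^2) k).2 = (1 - (k : F)) * l ^ k := by
  induction k with
  | zero => simp [ef]
  | succ k ih =>
      simp only [ef]
      constructor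
      · push_cast
        linear_combination (2*l) * ih.1 + l * ih.2
      · push_cast
        linear_combination (-l) * ih.1

private lemma finset_card_le_of_pow_eq {K : Type*} [Field K] {m : ℕ} (hm : 2 ≤ m)
    {S : Finset K} (hS : ∀ x ∈ S, x ^ m = x) : S.card ≤ m := by
  classical
  have hmonic : (X ^ m - X : K[X]).Monic := by
    apply monic_X_pow_sub
    rw [degree_X]
    exact_mod_cast (by omega : 1 < m)
  have hne : (X ^ m - X : K[X]) ≠ 0 := hmonic.ne_zero
  have hsub : S ⊆ (X ^ m - X : K[X]).roots.toFinset := by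
    intro x hx
    rw [Multiset.mem_toFinset, mem_roots hne]
    simp [IsRoot.def, hS x hx]
  calc S.card ≤ (X ^ m - X : K[X]).roots.toFinset.card := Finset.card_le_card hsub
    _ ≤ Multiset.card (X ^ m - X : K[X]).roots := Multiset.toFinset_card_le _
    _ ≤ (X ^ m - X : K[X]).natDegree := card_roots' _
    _ ≤ m := by
        refine le_trans (natDegree_sub_le _ _) ?_
        simp only [natDegree_X_pow, natDegree_X]
        omega

/-- first assertion of Theorem 2.9 of the paper.
Let `q = p^e` and let `n > 1` be odd.  If `α` has degree `n` over `F_q` and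
`α^q = (aα + b)/(cα + d)` for some `a, b, c, d ∈ F_q` with `ad − bc ≠ 0`, then
`n = p`, or `n ∣ q − 1`, or `n ∣ q + 1`. -/
theorem stmt_9 (p e q n : ℕ) (hp : p.Prime) (he : 1 ≤ e) (hq : q = p ^ e)
    (hodd : Odd n) (hn1 : 1 < n)
    (F K : Type*) [Field F] [Fintype F] (hF : Fintype.card F = q)
    [Field K] [Algebra F K] [IsAlgClosure F K]
    (α : K) (hα : (minpoly F α).natDegree = n)
    (a b c d : F) (hdet : a * d - b * c ≠ 0)
    (hden : algebraMap F K c * α + algebraMap F K d ≠ 0)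
    (hfrob : α ^ q * (algebraMap F K c * α + algebraMap F K d)
      = algebraMap F K a * α + algebraMap F K b) :
    n = p ∨ n ∣ q - 1 ∨ n ∣ q + 1 := by
  classical
  have hq2 : 2 ≤ q := by
    subst hq
    calc 2 ≤ p := hp.two_le
    _ ≤ p ^ e := Nat.le_self_pow (by omega) p
  have hn0 : 0 < n := by omega
  have hn3 : 3 ≤ n := by
    rcases hodd with ⟨t, ht⟩; omega
  haveI hfact : Fact p.Prime := ⟨hp⟩
  -- characteristic of F is p
  haveI hcharF : CharP F p := by
    obtain ⟨p', hp'⟩ := CharP.exists F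
    haveI := hp'
    obtain ⟨m, hp'prime, hcard⟩ := FiniteField.card F p'
    have hpp' : p = p' := by
      have h1 : p ∣ p' ^ (m : ℕ) := by
        rw [← hcard, hF, hq]
        exact dvd_pow_self p (by omega)
      exact (Nat.prime_dvd_prime_iff_eq hp hp'prime).mp (hp.dvd_of_dvd_pow h1)
    rwa [hpp']
  set ι := algebraMap F K with hι
  have hinj : Function.Injective ι := ι.injective
  haveI : CharP K p := charP_of_injective_algebraMap hinj p
  -- Frobenius facts
  have hFq : ∀ x : F, x ^ q = x := fun x => by rw [← hF]; exact FiniteField.pow_card x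
  have hFqk : ∀ (k : ℕ) (x : F), x ^ q ^ k = x := by
    intro k
    induction k with
    | zero => simp
    | succ k ih => intro x; rw [pow_succ, pow_mul, ih, hFq]
  let σ : K →+* K := iterateFrobenius K p e
  have hσ : ∀ x : K, σ x = x ^ q := fun x => by
    show iterateFrobenius K p e x = x ^ q
    rw [iterateFrobenius_def, hq]
  have hσι : ∀ x : F, σ (ι x) = ι x := fun x => by rw [hσ, ← map_pow, hFq]
  -- integrality
  haveI : IsAlgClosed K := IsAlgClosure.isAlgClosed F
  haveI : Algebra.IsAlgebraic F K := IsAlgClosure.isAlgebraic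
  haveI : Algebra.IsIntegral F K := Algebra.IsAlgebraic.isIntegral
  have hint : IsIntegral F α := Algebra.IsIntegral.isIntegral α
  -- the field F(α)
  haveI : FiniteDimensional F F⟮α⟯ := adjoin.finiteDimensional hint
  haveI : Finite F⟮α⟯ := Module.finite_of_finite F
  haveI : Fintype F⟮α⟯ := Fintype.ofFinite _
  have hαL : α ∈ F⟮α⟯ := mem_adjoin_simple_self F α
  have hcardL : Fintype.card F⟮α⟯ = q ^ n := by
    rw [Module.card_eq_pow_finrank (K := F), hF, adjoin.finrank hint, hα]
  have hfixn : α ^ q ^ n = α := by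
    have h1 : (⟨α, hαL⟩ : F⟮α⟯) ^ (q ^ n) = ⟨α, hαL⟩ := by
      rw [← hcardL]; exact FiniteField.pow_card _
    have h2 := congrArg (fun z : F⟮α⟯ => (z : K)) h1
    simpa using h2
  -- counting: if α^{q^k} = α with k > 0 then n ≤ k
  have hmain_count : ∀ k : ℕ, 0 < k → α ^ q ^ k = α → n ≤ k := by
    intro k hk hfix
    haveI : ExpChar K p := ExpChar.prime hp
    set φ : K →+* K := iterateFrobenius K p (e * k) with hφdef
    have hφ : ∀ x : K, φ x = x ^ q ^ k := fun x => by
      show iterateFrobenius K p (e * k) x = x ^ q ^ k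
      rw [iterateFrobenius_def, hq, ← pow_mul]
    set T : Subfield K :=
      { carrier := {x | φ x = x}
        one_mem' := map_one φ
        mul_mem' := fun hx hy => by
          simp only [Set.mem_setOf_eq, map_mul] at *; rw [hx, hy]
        add_mem' := fun hx hy => by
          simp only [Set.mem_setOf_eq, map_add] at *; rw [hx, hy]
        zero_mem' := map_zero φ
        neg_mem' := fun hx => by
          simp only [Set.mem_setOf_eq, map_neg] at *; rw [hx]
        inv_mem' := fun x hx => by
          simp only [Set.mem_setOf_eq, map_inv₀] at *; rw [hx] } with hT
    have hTmem : ∀ x : F, ι x ∈ T := fun x => by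
      show φ (ι x) = ι x
      rw [hφ, ← map_pow, hFqk k]
    have hLT : F⟮α⟯ ≤ Subfield.toIntermediateField T hTmem := by
      rw [adjoin_le_iff]
      intro x hx
      rw [Set.mem_singleton_iff] at hx
      subst hx
      show φ x = x
      rw [hφ]; exact hfix
    set S : Finset K := Finset.univ.image (fun x : F⟮α⟯ => (x : K)) with hS
    have hScard : S.card = q ^ n := by
      rw [hS, Finset.card_image_of_injective _ Subtype.val_injective,
        Finset.card_univ, hcardL]
    have hSfix : ∀ x ∈ S, x ^ q ^ k = x := by
      intro x hx
      rw [hS, Finset.mem_image] at hx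
      obtain ⟨y, -, rfl⟩ := hx
      have hy : (y : K) ∈ Subfield.toIntermediateField T hTmem := hLT y.2
      have hy2 : φ (y : K) = (y : K) := hy
      rwa [hφ] at hy2
    have hqk2 : 2 ≤ q ^ k := le_trans hq2 (Nat.le_self_pow (by omega) q)
    have hle := finset_card_le_of_pow_eq hqk2 hSfix
    rw [hScard] at hle
    exact (Nat.pow_le_pow_iff_right (by omega)).mp hle
  -- the main iteration: α^{q^k} is given by the k-th "matrix power"
  have key : ∀ k : ℕ,
      α ^ q ^ k * (ι (ef (a+d) (a*d-b*c) k).1 * ι c * α +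
        (ι (ef (a+d) (a*d-b*c) k).1 * ι d + ι (ef (a+d) (a*d-b*c) k).2))
      = (ι (ef (a+d) (a*d-b*c) k).1 * ι a + ι (ef (a+d) (a*d-b*c) k).2) * α +
        ι (ef (a+d) (a*d-b*c) k).1 * ι b := by
    intro k
    induction k with
    | zero => simp [ef]
    | succ k ih =>
        have h1 := congrArg σ ih
        simp only [map_mul, map_add, map_pow, hσι] at h1
        simp only [hσ] at h1
        rw [← pow_mul, ← pow_succ'] at h1
        simp only [ef, map_add, map_mul, map_neg, map_sub]
        linear_combination (ι c * α + ι d) * h1 -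
          (α ^ q ^ (k + 1) * (ι (ef (a+d) (a*d-b*c) k).1 * ι c) -
            (ι (ef (a+d) (a*d-b*c) k).1 * ι a + ι (ef (a+d) (a*d-b*c) k).2)) * hfrob
  -- α^q ≠ α
  have hα1 : ¬ (α ^ q = α) := by
    intro h
    have := hmain_count 1 one_pos (by rwa [pow_one])
    omega
  -- e_n = 0
  have hEn : (ef (a+d) (a*d-b*c) n).1 = 0 := by
    by_contra hEn
    have hrel := key n
    rw [hfixn] at hrel
    have hquad : ι (ef (a+d) (a*d-b*c) n).1 * (ι c * α ^ 2 + (ι d - ι a) * α - ι b) = 0 := by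
      linear_combination hrel
    have hEn' : ι (ef (a+d) (a*d-b*c) n).1 ≠ 0 := fun h => hEn (hinj (by rwa [map_zero]))
    have hquad2 : ι c * α ^ 2 + (ι d - ι a) * α - ι b = 0 :=
      (mul_eq_zero.mp hquad).resolve_left hEn'
    by_cases hzero : c = 0 ∧ d - a = 0 ∧ b = 0
    · obtain ⟨hc0, hda, hb0⟩ := hzero
      have hdeq : d = a := sub_eq_zero.mp hda
      have ha0 : a ≠ 0 := fun h => hdet (by rw [hdeq, h, hb0]; ring)
      have hfr := hfrob
      rw [hc0, hb0, hdeq] at hfr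
      simp only [map_zero, zero_mul, zero_add, add_zero] at hfr
      have hιa : ι a ≠ 0 := fun h => ha0 (hinj (by rwa [map_zero]))
      exact hα1 (mul_right_cancel₀ hιa (hfr.trans (mul_comm _ _)))
    · have hQne : (C c * X ^ 2 + C (d - a) * X + C (-b) : F[X]) ≠ 0 := by
        intro h
        apply hzero
        refine ⟨?_, ?_, ?_⟩
        · simpa using congrArg (fun P => Polynomial.coeff P 2) h
        · simpa using congrArg (fun P => Polynomial.coeff P 1) h
        · simpa using congrArg (fun P => Polynomial.coeff P 0) h
      have haev : (aeval α) (C c * X ^ 2 + C (d - a) * X + C (-b) : F[X]) = 0 := by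
        simp only [map_add, map_mul, map_pow, aeval_C, aeval_X, map_sub, map_neg]
        rw [← hι]
        linear_combination hquad2
      have hdeg := minpoly.degree_le_of_ne_zero F α hQne haev
      have hmindeg : (minpoly F α).degree = (n : WithBot ℕ) := by
        rw [degree_eq_natDegree (minpoly.ne_zero hint), hα]
      rw [hmindeg] at hdeg
      have hdegQ : (C c * X ^ 2 + C (d - a) * X + C (-b) : F[X]).degree ≤ 2 :=
        degree_quadratic_le
      have hn2 : (n : WithBot ℕ) ≤ 2 := le_trans hdeg hdegQ
      have : n ≤ 2 := by exact_mod_cast hn2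
      omega
  -- eigenvalues
  obtain ⟨lam, hlam⟩ := IsAlgClosed.exists_root
    (C (1:K) * X ^ 2 + C (-(ι (a+d))) * X + C (ι (a*d-b*c)))
    (by rw [degree_quadratic one_ne_zero]; exact (by norm_num : (2 : WithBot ℕ) ≠ 0))
  have hlam2 : lam ^ 2 = ι (a+d) * lam - ι (a*d-b*c) := by
    have h0 : eval lam (C (1:K) * X ^ 2 + C (-(ι (a+d))) * X + C (ι (a*d-b*c))) = 0 := hlam
    simp only [eval_add, eval_mul, eval_pow, eval_C, eval_X] at h0
    linear_combination h0
  set μ := ι (a+d) - lam with hμ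
  have hμ2 : μ ^ 2 = ι (a+d) * μ - ι (a*d-b*c) := by
    rw [hμ]; linear_combination hlam2
  have hlamμ : lam * μ = ι (a*d-b*c) := by
    rw [hμ]; linear_combination -hlam2
  have hΔ0 : ι (a*d-b*c) ≠ 0 := fun h => hdet (hinj (by rwa [map_zero]))
  have hlam0 : lam ≠ 0 := fun h => hΔ0 (by rw [← hlamμ, h, zero_mul])
  have hμ0 : μ ≠ 0 := fun h => hΔ0 (by rw [← hlamμ, h, mul_zero])
  have hlampow : ∀ k, lam ^ k = ι (ef (a+d) (a*d-b*c) k).1 * lam +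
      ι (ef (a+d) (a*d-b*c) k).2 := by
    intro k
    rw [(ef_map ι (a+d) (a*d-b*c) k).1, (ef_map ι (a+d) (a*d-b*c) k).2]
    exact ef_root _ _ _ hlam2 k
  have hμpow : ∀ k, μ ^ k = ι (ef (a+d) (a*d-b*c) k).1 * μ +
      ι (ef (a+d) (a*d-b*c) k).2 := by
    intro k
    rw [(ef_map ι (a+d) (a*d-b*c) k).1, (ef_map ι (a+d) (a*d-b*c) k).2]
    exact ef_root _ _ _ hμ2 k
  -- Frobenius permutes the eigenvalues
  have hlamq : lam ^ q = lam ∨ lam ^ q = μ := by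
    have h0 : (lam ^ q) ^ 2 = ι (a+d) * lam ^ q - ι (a*d-b*c) := by
      have h1 := congrArg σ hlam2
      simp only [map_sub, map_mul, map_pow, hσι] at h1
      simp only [hσ] at h1
      rw [← map_mul ι a d, ← map_mul ι b c, ← map_sub] at h1
      exact h1
    have h2 : (lam ^ q - lam) * (lam ^ q - μ) = 0 := by
      rw [hμ]; linear_combination h0 - hlam2
    rcases mul_eq_zero.mp h2 with h | h
    · left; exact sub_eq_zero.mp h
    · right; exact sub_eq_zero.mp h
  by_cases hrep : lam = μ
  · -- repeated eigenvalue: n = p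
    left
    have hlamq' : lam ^ q = lam := by
      rcases hlamq with h | h
      · exact h
      · rwa [← hrep] at h
    -- lam lies in the image of F
    have hexl : ∃ l : F, ι l = lam := by
      by_contra hno
      push_neg at hno
      set S : Finset K := insert lam (Finset.univ.image ι) with hS
      have hnotmem : lam ∉ Finset.univ.image ι := by
        intro hmem
        obtain ⟨l, -, hl⟩ := Finset.mem_image.mp hmem
        exact hno l hl
      have hcard : S.card = q + 1 := by
        rw [hS, Finset.card_insert_of_notMem hnotmem,
          Finset.card_image_of_injective _ hinj, Finset.card_univ, hF]
      have hSfix : ∀ x ∈ S, x ^ q = x := by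
        intro x hx
        rcases Finset.mem_insert.mp hx with h | h
        · subst h; exact hlamq'
        · obtain ⟨l, -, rfl⟩ := Finset.mem_image.mp h
          rw [← map_pow, hFq]
      have := finset_card_le_of_pow_eq hq2 hSfix
      omega
    obtain ⟨l, hl⟩ := hexl
    have hl0 : l ≠ 0 := fun h => hlam0 (by rw [← hl, h, map_zero])
    have ht2 : a + d = 2 * l := by
      apply hinj
      have : ι (a+d) = lam + μ := by rw [hμ]; ring
      rw [this, ← hrep, ← hl]
      push_cast [map_mul, map_ofNat]
      ring
    have hΔ2 : a * d - b * c = l ^ 2 := by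
      apply hinj
      rw [← hlamμ, ← hrep, ← hl, map_pow]
      ring
    have hp0 : ((p : ℕ) : F) = 0 := CharP.cast_eq_zero F p
    -- p ∣ n
    have hpn : p ∣ n := by
      have h1 := (ef_rep l n).1
      rw [← ht2, ← hΔ2, hEn, zero_mul] at h1
      have hln : l ^ n ≠ 0 := pow_ne_zero _ hl0
      have hn0' : ((n : ℕ) : F) = 0 := by
        rcases mul_eq_zero.mp h1.symm with h | h
        · exact h
        · exact absurd h hln
      exact (CharP.cast_eq_zero_iff F p n).mp hn0'
    -- α^{q^p} = α, hence n ≤ p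
    have hEp : (ef (a+d) (a*d-b*c) p).1 = 0 := by
      have h1 := (ef_rep l p).1
      rw [← ht2, ← hΔ2, hp0, zero_mul] at h1
      exact (mul_eq_zero.mp h1).resolve_right hl0
    have hFp : (ef (a+d) (a*d-b*c) p).2 = l ^ p := by
      have h1 := (ef_rep l p).2
      rw [← ht2, ← hΔ2, hp0] at h1
      rw [h1]; ring
    have hFp0 : ι (ef (a+d) (a*d-b*c) p).2 ≠ 0 := by
      rw [hFp]
      intro h
      exact pow_ne_zero p hl0 (hinj (by rwa [map_zero]))
    have hfixp : α ^ q ^ p = α := by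
      have hk := key p
      rw [hEp] at hk
      simp only [map_zero, zero_mul, zero_add, add_zero] at hk
      exact mul_right_cancel₀ hFp0 (hk.trans (mul_comm _ _))
    have hnp : n ≤ p := hmain_count p hp.pos hfixp
    have hpn' : p ≤ n := Nat.le_of_dvd hn0 hpn
    omega
  · -- distinct eigenvalues
    have hfn : ι (ef (a+d) (a*d-b*c) n).2 = lam ^ n := by
      rw [hlampow n, hEn, map_zero, zero_mul, zero_add]
    have hfnμ : ι (ef (a+d) (a*d-b*c) n).2 = μ ^ n := by
      rw [hμpow n, hEn, map_zero, zero_mul, zero_add]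
    set r := lam * μ⁻¹ with hr
    have hr0 : r ≠ 0 := mul_ne_zero hlam0 (inv_ne_zero hμ0)
    have hrn : r ^ n = 1 := by
      rw [hr, mul_pow, inv_pow, ← hfn, ← hfnμ]
      exact mul_inv_cancel₀ (by rw [hfn]; exact pow_ne_zero _ hlam0)
    have hford : IsOfFinOrder r := isOfFinOrder_iff_pow_eq_one.mpr ⟨n, hn0, hrn⟩
    set dd := orderOf r with hdd
    have hdvd : dd ∣ n := orderOf_dvd_of_pow_eq_one hrn
    have hddpos : 0 < dd := hford.orderOf_pos
    have hrd : r ^ dd = 1 := pow_orderOf_eq_one r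
    have hlamd : lam ^ dd = μ ^ dd := by
      have h1 : lam ^ dd * (μ ^ dd)⁻¹ = 1 := by
        rw [← inv_pow, ← mul_pow]; exact hrd
      have hμd : μ ^ dd ≠ 0 := pow_ne_zero _ hμ0
      field_simp at h1
      exact h1
    have hEd : (ef (a+d) (a*d-b*c) dd).1 = 0 := by
      have h1 := hlampow dd
      have h2 := hμpow dd
      have h3 : ι (ef (a+d) (a*d-b*c) dd).1 * (lam - μ) = 0 := by
        linear_combination h2 - h1 + hlamd
      have hlm : lam - μ ≠ 0 := sub_ne_zero.mpr hrep
      exact hinj (by rw [map_zero]; exact (mul_eq_zero.mp h3).resolve_right hlm)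
    have hfd0 : ι (ef (a+d) (a*d-b*c) dd).2 ≠ 0 := by
      have h1 := hlampow dd
      rw [hEd, map_zero, zero_mul, zero_add] at h1
      rw [← h1]
      exact pow_ne_zero _ hlam0
    have hfixd : α ^ q ^ dd = α := by
      have hk := key dd
      rw [hEd] at hk
      simp only [map_zero, zero_mul, zero_add, add_zero] at hk
      exact mul_right_cancel₀ hfd0 (hk.trans (mul_comm _ _))
    have hnd : n ≤ dd := hmain_count dd hddpos hfixd
    have hdn : dd = n := le_antisymm (Nat.le_of_dvd hn0 hdvd) hnd
    rcases hlamq with hql | hqμ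
    · right; left
      have hμq : μ ^ q = μ := by
        calc μ ^ q = σ μ := (hσ μ).symm
          _ = ι (a+d) - lam ^ q := by rw [hμ, map_sub, hσι, hσ]
          _ = μ := by rw [hql, hμ]
      have hrq : r ^ q = r := by rw [hr, mul_pow, inv_pow, hql, hμq]
      have hrq1 : r ^ (q - 1) = 1 := by
        have hq1 : q - 1 + 1 = q := by omega
        have h1 : r ^ (q - 1) * r = 1 * r := by
          rw [← pow_succ, hq1, hrq, one_mul]
        exact mul_right_cancel₀ hr0 h1
      have : dd ∣ q - 1 := orderOf_dvd_of_pow_eq_one hrq1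
      rwa [hdn] at this
    · right; right
      have hμq : μ ^ q = lam := by
        calc μ ^ q = σ μ := (hσ μ).symm
          _ = ι (a+d) - lam ^ q := by rw [hμ, map_sub, hσι, hσ]
          _ = lam := by rw [hqμ, hμ]; ring
      have hrq1 : r ^ (q + 1) = 1 := by
        rw [pow_succ, hr, mul_pow, inv_pow, hqμ, hμq]
        field_simp
      have : dd ∣ q + 1 := orderOf_dvd_of_pow_eq_one hrq1
      rwa [hdn] at this
end

section
/- Let q be a prime power and let n > 1 be an odd integer dividing q − 1. For a nonzero element α of an algebraic closure of F_q, the following are equivalent: (1) the minimal polynomial of α over F_q has degree n and α^q = r·α for some element r ∈ F_q of multiplicative order n; (2) α lies in F_{q^n} and α^{q−1} has multiplicative order n. -/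
open Polynomial
open scoped IntermediateField

/-- Any finset of a field all of whose elements satisfy `x ^ m = x` (with `1 < m`)
has at most `m` elements. -/
lemma aux_card_le_of_pow_eq {K : Type*} [Field K] (m : ℕ) (hm : 1 < m) (S : Finset K)
    (hS : ∀ x ∈ S, x ^ m = x) : S.card ≤ m := by
  classical
  have hne : (X ^ m - X : K[X]) ≠ 0 := FiniteField.X_pow_card_sub_X_ne_zero K hm
  have hsub : S ⊆ (X ^ m - X : K[X]).roots.toFinset := by
    intro x hx
    simp only [Multiset.mem_toFinset, mem_roots hne, IsRoot.def, eval_sub, eval_pow, eval_X,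
      sub_eq_zero]
    exact hS x hx
  calc S.card ≤ _ := Finset.card_le_card hsub
    _ ≤ (X ^ m - X : K[X]).roots.card := (X ^ m - X : K[X]).roots.toFinset_card_le
    _ ≤ (X ^ m - X : K[X]).natDegree := (X ^ m - X : K[X]).card_roots'
    _ = m := FiniteField.X_pow_card_sub_X_natDegree_eq K hm

/-- A fixed point of the `q`-power Frobenius in an extension of a finite field of
cardinality `q` lies in the base field. -/
lemma aux_exists_algebraMap_of_pow_card {F K : Type*} [Field F] [Fintype F] [Field K]
    [Algebra F K] {x : K} (hx : x ^ (Fintype.card F) = x) :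
    ∃ r : F, algebraMap F K r = x := by
  classical
  set q := Fintype.card F with hqdef
  by_contra h
  push_neg at h
  set S : Finset K := insert x (Finset.univ.image (algebraMap F K)) with hSdef
  have hq1 : 1 < q := Fintype.one_lt_card
  have hxmem : x ∉ Finset.univ.image (algebraMap F K) := by
    simp only [Finset.mem_image]
    rintro ⟨r, -, hr⟩
    exact h r hr
  have hcard : S.card = q + 1 := by
    rw [hSdef, Finset.card_insert_of_notMem hxmem,
      Finset.card_image_of_injective _ (algebraMap F K).injective, Finset.card_univ]
  have hle : S.card ≤ q := by
    refine aux_card_le_of_pow_eq q hq1 S ?_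
    intro y hy
    rcases Finset.mem_insert.mp hy with rfl | hy
    · exact hx
    · obtain ⟨r, -, rfl⟩ := Finset.mem_image.mp hy
      rw [← map_pow, FiniteField.pow_card]
  omega

/-- from the proof of Theorem 2.9 of the paper, case `n ∣ q − 1`.
For `n > 1` odd dividing `q − 1` and `α ≠ 0` in an algebraic closure of `F_q`,
the following are equivalent: (1) `α` has degree `n` over `F_q` and `α^q = r·α`
for some `r ∈ F_q` of multiplicative order `n`; (2) `α ∈ F_{q^n}` (i.e.
`α^{q^n} = α`) and `α^{q−1}` has multiplicative order `n`. -/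
theorem stmt_12 (q n : ℕ) (hq : IsPrimePow q) (hodd : Odd n) (hn1 : 1 < n)
    (hdvd : n ∣ q - 1)
    (F K : Type*) [Field F] [Fintype F] (hF : Fintype.card F = q)
    [Field K] [Algebra F K] [IsAlgClosure F K]
    (α : K) (hα0 : α ≠ 0) :
    ((minpoly F α).natDegree = n ∧
        ∃ r : F, orderOf r = n ∧ α ^ q = algebraMap F K r * α)
      ↔ (α ^ q ^ n = α ∧ orderOf (α ^ (q - 1)) = n) := by
  classical
  have hq2 : 2 ≤ q := hq.two_le
  have hq1 : 1 ≤ q := le_trans (by norm_num) hq2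
  have hinj : Function.Injective (algebraMap F K) := (algebraMap F K).injective
  -- the key iteration formula
  have key : ∀ r : F, α ^ q = algebraMap F K r * α →
      ∀ k : ℕ, α ^ q ^ k = (algebraMap F K r) ^ k * α := by
    intro r hαq k
    induction k with
    | zero => simp
    | succ k ih =>
      have h1 : α ^ q ^ (k + 1) = (α ^ q ^ k) ^ q := by
        rw [← pow_mul, pow_succ]
      have h2 : ((algebraMap F K r) ^ k) ^ q = (algebraMap F K r) ^ k := by
        rw [← map_pow, ← map_pow, ← hF, FiniteField.pow_card]
      rw [h1, ih, mul_pow, h2, hαq, pow_succ]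
      ring
  have hord : ∀ r : F, orderOf (algebraMap F K r) = orderOf r := fun r =>
    orderOf_injective (algebraMap F K).toMonoidHom hinj r
  have hstep : α ^ (q - 1) * α = α ^ q := by
    rw [← pow_succ, Nat.sub_add_cancel hq1]
  constructor
  · rintro ⟨hdeg, r, hr, hαq⟩
    have hρn : (algebraMap F K r) ^ n = 1 := by
      rw [← map_pow, ← hr, pow_orderOf_eq_one, map_one]
    constructor
    · rw [key r hαq n, hρn, one_mul]
    · have hβρ : α ^ (q - 1) = algebraMap F K r :=
        mul_right_cancel₀ hα0 (by rw [hstep, hαq])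
      rw [hβρ, hord r, hr]
  · rintro ⟨hfix, hordβ⟩
    -- the element `β = α^(q-1)` is fixed by Frobenius, hence comes from `F`
    set β := α ^ (q - 1) with hβdef
    have hβn : β ^ n = 1 := by rw [← hordβ, pow_orderOf_eq_one]
    have hβq : β ^ q = β := by
      obtain ⟨k, hk⟩ := hdvd
      have hβq1 : β ^ (q - 1) = 1 := by
        rw [hk, pow_mul, hβn, one_pow]
      calc β ^ q = β ^ (q - 1 + 1) := by rw [Nat.sub_add_cancel hq1]
        _ = β := by rw [pow_succ, hβq1, one_mul]
    obtain ⟨r, hrβ⟩ := aux_exists_algebraMap_of_pow_card (F := F) (by rw [hF]; exact hβq)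
    have hrn : orderOf r = n := by rw [← hord r, hrβ, hordβ]
    have hαq : α ^ q = algebraMap F K r * α := by rw [hrβ, hstep]
    refine ⟨?_, r, hrn, hαq⟩
    -- now compute the degree
    have : Algebra.IsAlgebraic F K := IsAlgClosure.isAlgebraic
    have hint : IsIntegral F α := Algebra.IsIntegral.isIntegral α
    set d := (minpoly F α).natDegree with hddef
    have hd0 : 0 < d := minpoly.natDegree_pos hint
    haveI : FiniteDimensional F F⟮α⟯ := IntermediateField.adjoin.finiteDimensional hint
    haveI : Finite F⟮α⟯ := Module.finite_of_finite F
    haveI : Fintype F⟮α⟯ := Fintype.ofFinite _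
    have hcard : Fintype.card F⟮α⟯ = q ^ d := by
      rw [Module.card_eq_pow_finrank (K := F) (V := F⟮α⟯), hF, IntermediateField.adjoin.finrank hint]
    -- `n ∣ d`
    have hmem : α ∈ F⟮α⟯ := IntermediateField.mem_adjoin_simple_self F α
    have hαd : α ^ q ^ d = α := by
      have h1 : (⟨α, hmem⟩ : F⟮α⟯) ^ q ^ d = ⟨α, hmem⟩ := by
        rw [← hcard]; exact FiniteField.pow_card _
      have h2 := congrArg (fun x : F⟮α⟯ => (x : K)) h1
      simpa using h2
    have hρd : (algebraMap F K r) ^ d = 1 := by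
      have := key r hαq d
      rw [hαd] at this
      have := mul_right_cancel₀ hα0 (by rw [← this, one_mul] :
        (1 : K) * α = (algebraMap F K r) ^ d * α)
      exact this.symm
    have hnd : n ∣ d := by
      rw [← hrn, ← hord r]
      exact orderOf_dvd_of_pow_eq_one hρd
    -- `d ≤ n` : every element of `F⟮α⟯` is fixed by the `q^n`-power Frobenius
    have hfixall : ∀ x ∈ F⟮α⟯, x ^ q ^ n = x := by
      -- characteristic, for the additive case
      obtain ⟨c, hp, hc⟩ := FiniteField.card F (ringChar F)
      haveI : Fact (Nat.Prime (ringChar F)) := ⟨hp⟩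
      haveI : CharP K (ringChar F) := charP_of_injective_algebraMap hinj (ringChar F)
      rw [hF] at hc
      have hqe : q ^ n = ringChar F ^ ((c : ℕ) * n) := by rw [hc, pow_mul]
      intro x hx
      induction hx using IntermediateField.adjoin_induction with
      | mem x hx =>
        rcases Set.mem_singleton_iff.mp hx with rfl
        exact hfix
      | algebraMap x => rw [← map_pow, ← hF, FiniteField.pow_card_pow]
      | add x y hx hy ihx ihy =>
        rw [hqe, add_pow_char_pow, ← hqe, ihx, ihy]
      | inv x hx ihx => rw [inv_pow, ihx]
      | mul x y hx hy ihx ihy => rw [mul_pow, ihx, ihy]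
    have hdn : d ≤ n := by
      have h1qn : 1 < q ^ n := Nat.one_lt_pow (by omega) (by omega)
      have hSle : (Finset.univ.image (Subtype.val : F⟮α⟯ → K)).card ≤ q ^ n := by
        refine aux_card_le_of_pow_eq (q ^ n) h1qn _ ?_
        intro x hx
        obtain ⟨y, -, rfl⟩ := Finset.mem_image.mp hx
        exact hfixall y.1 y.2
      rw [Finset.card_image_of_injective _ Subtype.val_injective, Finset.card_univ, hcard]
        at hSle
      exact (Nat.pow_le_pow_iff_right (by omega : 1 < q)).mp hSle
    exact Nat.le_antisymm hdn (Nat.le_of_dvd hd0 hnd)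
end

section
/- Let q be a prime power, let n > 1 be an odd integer dividing q − 1, and let ω be an element of F_{q^n}^× of multiplicative order n·(q−1). Let S := { α ∈ F_{q^n}^× : α^{q−1} has multiplicative order n }, and consider the equivalence relation on S generated by α ∼ c·α for c ∈ F_q^× and α ∼ α⁻¹. Then S = { ω^i : gcd(i, n) = 1 }, and the set { ω^i : 0 < i < n/2 and gcd(i, n) = 1 } contains exactly one element of each equivalence class of S. -/
/-!
Put `m = q - 1`. Then `ω` is a primitive `nm`-th root of unity and `ω ^ m` a primitive `n`-th
one, so every `α` with `α ^ (nm) = 1` is a power `ω ^ i`, and `(ω ^ i) ^ m` has order `n` exactly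
when `i` is prime to `n`. The image of `F^×` in `K` is the set of roots of `X ^ m - 1`, i.e. the
powers of `ω ^ n`; hence `ω ^ i` is equivalent to `ω ^ (± i + n k)`. Conversely `α ↦ α ^ m` kills
`F^×` and commutes with inversion, so `α ^ m` up to inversion is a class invariant. Classes thus
correspond to residues `± i mod n`, and since `n` is odd each has a unique representative in
`(0, n/2)`.
-/

open Polynomial Relation

theorem FiniteField.mem_range_algebraMap_of_pow_card_eq_self {F K : Type*} [Field F] [Fintype F]
    [Field K] [Algebra F K] {x : K} (hx : x ^ Fintype.card F = x) :
    x ∈ Set.range (algebraMap F K) := by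
  have hne : (X ^ Fintype.card F - X : F[X]) ≠ 0 :=
    FiniteField.X_pow_card_sub_X_ne_zero F Fintype.one_lt_card
  have hsplits : Splits (X ^ Fintype.card F - X : F[X]) := by
    rw [splits_iff_card_roots, FiniteField.roots_X_pow_card_sub_X, ← Finset.card_def,
      Finset.card_univ, FiniteField.X_pow_card_sub_X_natDegree_eq _ Fintype.one_lt_card]
  have hroot : x ∈ ((X ^ Fintype.card F - X : F[X]).map (algebraMap F K)).roots := by
    rw [mem_roots_map hne]
    simp [hx]
  rw [hsplits.roots_map, FiniteField.roots_X_pow_card_sub_X, Multiset.mem_map] at hroot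
  obtain ⟨c, -, hc⟩ := hroot
  exact ⟨c, hc⟩

theorem IsPrimitiveRoot.ne_zero_and_orderOf_pow_eq_iff {R : Type*} [CommRing R] [IsDomain R]
    {ω : R} {n m : ℕ} (hω : IsPrimitiveRoot ω (n * m)) (hn : 0 < n) (hm : 0 < m) (α : R) :
    (α ≠ 0 ∧ orderOf (α ^ m) = n) ↔ ∃ i, i.Coprime n ∧ α = ω ^ i := by
  have hωm : IsPrimitiveRoot (ω ^ m) n := IsPrimitiveRoot.pow (by positivity) hω (mul_comm n m)
  constructor
  · rintro ⟨-, hα⟩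
    have : NeZero (n * m) := ⟨by positivity⟩
    have hα1 : α ^ (n * m) = 1 := by rw [mul_comm, pow_mul, ← hα, pow_orderOf_eq_one]
    obtain ⟨i, -, rfl⟩ := hω.eq_pow_of_pow_eq_one hα1
    rw [← pow_mul, mul_comm, pow_mul] at hα
    exact ⟨i, (hωm.pow_iff_coprime hn i).1 (IsPrimitiveRoot.iff_orderOf.2 hα), rfl⟩
  · rintro ⟨i, hi, rfl⟩
    refine ⟨pow_ne_zero _ (hω.ne_zero (by positivity)), ?_⟩
    rw [← pow_mul, mul_comm, pow_mul]
    exact ((hωm.pow_iff_coprime hn i).2 hi).eq_orderOf.symm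

theorem IsPrimitiveRoot.eq_of_pow_eq_or_pow_eq_inv {G₀ : Type*} [CommGroupWithZero G₀] {ζ : G₀}
    {n i j : ℕ} (h : IsPrimitiveRoot ζ n) (hi : 0 < i) (hin : 2 * i < n) (hjn : 2 * j < n)
    (H : ζ ^ i = ζ ^ j ∨ ζ ^ i = (ζ ^ j)⁻¹) : i = j := by
  rcases H with H | H
  · exact h.pow_inj (by omega) (by omega) H
  · have : n ∣ i + j := by
      rw [← h.pow_eq_one_iff_dvd, pow_add, H,
        inv_mul_cancel₀ (pow_ne_zero _ (h.ne_zero (by omega)))]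
    have := Nat.le_of_dvd (by omega) this
    omega

theorem Nat.Coprime.exists_small_signed_residue {i n : ℕ} (hi : i.Coprime n) (hn : Odd n)
    (hn1 : 1 < n) : ∃ j k, 0 < j ∧ 2 * j < n ∧ j.Coprime n ∧ (i = j + n * k ∨ i + j = n * k) := by
  have hr : (i % n).Coprime n := (ZMod.coprime_mod_iff_coprime i n).2 hi
  have hr0 : 0 < i % n := by
    refine Nat.pos_of_ne_zero fun h => ?_
    rw [h, Nat.coprime_zero_left] at hr
    omega
  have hrn : i % n < n := Nat.mod_lt _ (by omega)
  have hdiv := Nat.mod_add_div i n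
  obtain ⟨m, rfl⟩ := hn
  rcases lt_or_gt_of_ne (show 2 * (i % (2 * m + 1)) ≠ 2 * m + 1 by omega) with h | h
  · exact ⟨i % (2 * m + 1), i / (2 * m + 1), hr0, h, hr, .inl (by omega)⟩
  · refine ⟨2 * m + 1 - i % (2 * m + 1), i / (2 * m + 1) + 1, by omega, by omega,
      (Nat.coprime_self_sub_left hrn.le).2 hr, .inr ?_⟩
    rw [Nat.mul_add_one]
    omega

def ScalarMulOrInv (F K : Type*) [Field F] [Field K] [Algebra F K] (x y : K) : Prop :=
  (∃ c : F, c ≠ 0 ∧ y = algebraMap F K c * x) ∨ y = x⁻¹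

namespace ScalarMulOrInv

variable {F K : Type*} [Field F] [Fintype F] [Field K] [Algebra F K]

theorem eqvGen_mul {a : K} (ha : a ^ (Fintype.card F - 1) = 1) (x : K) :
    EqvGen (ScalarMulOrInv F K) x (a * x) := by
  have hq : Fintype.card F - 1 ≠ 0 := by have := Fintype.one_lt_card (α := F); omega
  have ha0 : a ≠ 0 := ne_zero_pow hq (by rw [ha]; exact one_ne_zero)
  have haq : a ^ Fintype.card F = a := by
    rw [← Nat.sub_add_cancel Fintype.card_pos, pow_succ, ha, one_mul]
  obtain ⟨c, rfl⟩ := FiniteField.mem_range_algebraMap_of_pow_card_eq_self haq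
  exact .rel _ _ (.inl ⟨c, (_root_.map_ne_zero _).1 ha0, rfl⟩)

theorem eqvGen_pow_pow {ω : K} {n i j k : ℕ} (hω : ω ≠ 0)
    (hωn : (ω ^ n) ^ (Fintype.card F - 1) = 1) (hij : i = j + n * k ∨ i + j = n * k) :
    EqvGen (ScalarMulOrInv F K) (ω ^ i) (ω ^ j) := by
  have hωnk : ((ω ^ n) ^ k) ^ (Fintype.card F - 1) = 1 := by rw [pow_right_comm, hωn, one_pow]
  rcases hij with rfl | hij
  · rw [pow_add, mul_comm, pow_mul]
    exact .symm _ _ (eqvGen_mul hωnk _)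
  · have : ω ^ j = (ω ^ n) ^ k * (ω ^ i)⁻¹ := by
      rw [← pow_mul, ← hij, add_comm, pow_add, mul_inv_cancel_right₀ (pow_ne_zero _ hω)]
    rw [this]
    exact .trans _ _ _ (.rel _ _ (.inr rfl)) (eqvGen_mul hωnk _)

theorem pow_card_sub_one_of_eqvGen {x y : K} (h : EqvGen (ScalarMulOrInv F K) x y) :
    y ^ (Fintype.card F - 1) = x ^ (Fintype.card F - 1) ∨
      y ^ (Fintype.card F - 1) = (x ^ (Fintype.card F - 1))⁻¹ := by
  induction h with
  | rel x y hxy =>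
    rcases hxy with ⟨c, hc, rfl⟩ | rfl
    · left
      rw [mul_pow, ← map_pow, FiniteField.pow_card_sub_one_eq_one c hc, map_one, one_mul]
    · exact .inr (inv_pow x _)
  | refl => exact .inl rfl
  | symm x y _ ih => rcases ih with h | h <;> simp [h]
  | trans x y z _ _ ih₁ ih₂ =>
    rcases ih₁ with h₁ | h₁ <;> rcases ih₂ with h₂ | h₂ <;> simp [h₁, h₂]

end ScalarMulOrInv

theorem stmt_13_general (q n : ℕ) (hodd : Odd n) (hn1 : 1 < n)
    (F K : Type*) [Field F] [Fintype F] (hF : Fintype.card F = q)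
    [Field K] [Algebra F K]
    (ω : K) (hω : orderOf ω = n * (q - 1))
    (S : Set K) (hS : S = {α : K | α ≠ 0 ∧ orderOf (α ^ (q - 1)) = n})
    (rel : K → K → Prop)
    (hrel : rel = fun x y => (∃ c : F, c ≠ 0 ∧ y = algebraMap F K c * x) ∨ y = x⁻¹) :
    S = {x : K | ∃ i : ℕ, Nat.Coprime i n ∧ x = ω ^ i} ∧
    ∀ α ∈ S, ∃! t : K,
      (∃ i : ℕ, 0 < i ∧ 2 * i < n ∧ Nat.Coprime i n ∧ t = ω ^ i) ∧
      Relation.EqvGen rel α t := by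
  subst hS hrel hF
  have hq : 0 < Fintype.card F - 1 := by have := Fintype.one_lt_card (α := F); omega
  have hωprim : IsPrimitiveRoot ω (n * (Fintype.card F - 1)) := hω ▸ IsPrimitiveRoot.orderOf ω
  have hη : IsPrimitiveRoot (ω ^ (Fintype.card F - 1)) n :=
    IsPrimitiveRoot.pow (by positivity) hωprim (mul_comm _ _)
  have hSeq : {α : K | α ≠ 0 ∧ orderOf (α ^ (Fintype.card F - 1)) = n} =
      {x : K | ∃ i : ℕ, Nat.Coprime i n ∧ x = ω ^ i} :=
    Set.ext (hωprim.ne_zero_and_orderOf_pow_eq_iff (by omega) hq)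
  refine ⟨hSeq, ?_⟩
  rw [hSeq]
  rintro _ ⟨i₀, hi₀, rfl⟩
  obtain ⟨i, k, hi0, hin, hi, hik⟩ := hi₀.exists_small_signed_residue hodd hn1
  have hrep : EqvGen (ScalarMulOrInv F K) (ω ^ i₀) (ω ^ i) :=
    ScalarMulOrInv.eqvGen_pow_pow (hωprim.ne_zero (by positivity))
      (by rw [← pow_mul, hωprim.pow_eq_one]) hik
  refine ⟨ω ^ i, ⟨⟨i, hi0, hin, hi, rfl⟩, hrep⟩, ?_⟩
  rintro _ ⟨⟨j, hj0, hjn, -, rfl⟩, hj⟩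
  have := ScalarMulOrInv.pow_card_sub_one_of_eqvGen (.trans _ _ _ (.symm _ _ hrep) hj)
  simp only [pow_right_comm ω _ (Fintype.card F - 1)] at this
  rw [hη.eq_of_pow_eq_or_pow_eq_inv hj0 hjn hin this]

/-- from the proof of Theorem 2.9 of the paper, case `n ∣ q − 1`.
Let `n > 1` be odd dividing `q − 1`, let `ω ∈ F_{q^n}^×` have multiplicative order
`n(q−1)`, and let `S` be the set of `α ∈ F_{q^n}^×` such that `α^{q−1}` has order
`n`.  Consider the equivalence relation on `S` generated by `α ∼ c·α` (`c ∈ F_q^×`)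
and `α ∼ α⁻¹`.  Then `S = {ω^i : gcd(i,n) = 1}`, and
`{ω^i : 0 < i < n/2, gcd(i,n) = 1}` contains exactly one element of each class. -/
theorem stmt_13 (q n : ℕ) (hq : IsPrimePow q) (hodd : Odd n) (hn1 : 1 < n)
    (hdvd : n ∣ q - 1)
    (F K : Type*) [Field F] [Fintype F] (hF : Fintype.card F = q)
    [Field K] [Fintype K] [Algebra F K] (hK : Fintype.card K = q ^ n)
    (ω : K) (hω : orderOf ω = n * (q - 1))
    (S : Set K) (hS : S = {α : K | α ≠ 0 ∧ orderOf (α ^ (q - 1)) = n})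
    (rel : K → K → Prop)
    (hrel : rel = fun x y => (∃ c : F, c ≠ 0 ∧ y = algebraMap F K c * x) ∨ y = x⁻¹) :
    S = {x : K | ∃ i : ℕ, Nat.Coprime i n ∧ x = ω ^ i} ∧
    ∀ α ∈ S, ∃! t : K,
      (∃ i : ℕ, 0 < i ∧ 2 * i < n ∧ Nat.Coprime i n ∧ t = ω ^ i) ∧
      Relation.EqvGen rel α t :=
  stmt_13_general q n hodd hn1 F K hF ω hω S hS rel hrel
end

section
/- Let q be a prime power and let n ≥ 4. For a monic irreducible polynomial f of degree n over F_q with root α in F_{q^n}, define χ(f) := ((α^{q³} − α^q)(α^{q²} − α)) / ((α^{q³} − α)(α^{q²} − α^q)) ∈ F_{q^n}, and define the cross polynomial Cross(f) to be the characteristic polynomial of the F_q-linear map 'multiplication by χ(f)' on F_{q^n} (this is independent of the choice of root α). Let PGL₂(F_q) act on monic irreducible degree-n polynomials by letting the class of a matrix (a b; c d) send the homogenization f(x,y) to the monic scalar multiple of f(dx − by, −cx + ay). Then two monic irreducible polynomials f₁, f₂ of degree n over F_q lie in the same PGL₂(F_q)-orbit if and only if Cross(f₁) = Cross(f₂). 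-/
/-- The action of a matrix `(a b; c d)` on a (degree-`n`) polynomial:
homogenize `f` to degree `n`, substitute `x ↦ dx − by`, `y ↦ −cx + ay`, and
dehomogenize (set `y = 1`).  Explicitly, `f(x,y) = ∑ fᵢ xⁱ y^{n−i}` is sent to
`∑ fᵢ (dX − b)ⁱ (a − cX)^{n−i}`. -/
noncomputable def transform {F : Type*} [Field F] (n : ℕ) (a b c d : F)
    (f : Polynomial F) : Polynomial F :=
  ∑ i ∈ Finset.range (n + 1),
    Polynomial.C (f.coeff i) * (Polynomial.C d * Polynomial.X - Polynomial.C b) ^ i *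
      (Polynomial.C a - Polynomial.C c * Polynomial.X) ^ (n - i)

/-!
The cross ratio is invariant under Möbius maps, and a Möbius map with coefficients in `F = 𝔽_q`
commutes with the Frobenius `x ↦ x ^ q`. So if `(a b; c d)` carries `f₁` to a multiple of `f₂`,
it moves `α₁` to a root `β` of `f₂` with `χ(β) = χ(α₁)`; as `β` is Galois conjugate to `α₂`, the
elements `χ₁` and `χ₂` are conjugate, and conjugates have the same characteristic polynomial.

Conversely, equal characteristic polynomials make `χ₂` conjugate to `χ₁`, i.e. `χ₂ = χ(γ)` for a
conjugate `γ` of `α₁`. The Möbius map over `K` sending `γ, γ^q, γ^{q²}` to `α₂, α₂^q, α₂^{q²}`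
also sends `γ^{q³}` to `α₂^{q³}` because the cross ratios agree. Its Frobenius twist then agrees
with it at three points, so is a scalar multiple of it; dividing by a suitable entry gives a
Frobenius-fixed matrix, i.e. one over `F`, and it transforms `f₁` into a multiple of `f₂`.
-/

open Polynomial
open scoped TensorProduct

section Mobius

variable {K : Type*} [Field K]

def crossRatio (x₀ x₁ x₂ x₃ : K) : K := ((x₃ - x₁) * (x₂ - x₀)) / ((x₃ - x₀) * (x₂ - x₁))

theorem map_crossRatio {L G : Type*} [Field L] [FunLike G K L] [RingHomClass G K L] (σ : G)
    (x₀ x₁ x₂ x₃ : K) :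
    σ (crossRatio x₀ x₁ x₂ x₃) = crossRatio (σ x₀) (σ x₁) (σ x₂) (σ x₃) := by
  simp [crossRatio, map_div₀]

theorem crossRatio_eq_iff {x₀ x₁ x₂ x₃ y₀ y₁ y₂ y₃ : K} (hx₀₃ : x₀ ≠ x₃) (hx₁₂ : x₁ ≠ x₂)
    (hy₀₃ : y₀ ≠ y₃) (hy₁₂ : y₁ ≠ y₂) :
    crossRatio x₀ x₁ x₂ x₃ = crossRatio y₀ y₁ y₂ y₃ ↔
      (x₃ - x₁) * (x₂ - x₀) * ((y₃ - y₀) * (y₂ - y₁)) =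
        (y₃ - y₁) * (y₂ - y₀) * ((x₃ - x₀) * (x₂ - x₁)) :=
  div_eq_div_iff (mul_ne_zero (sub_ne_zero.2 hx₀₃.symm) (sub_ne_zero.2 hx₁₂.symm))
    (mul_ne_zero (sub_ne_zero.2 hy₀₃.symm) (sub_ne_zero.2 hy₁₂.symm))

-- `a * x + b = y * (c * x + d)` says that the Möbius map of `(a b; c d)` sends `x` to `y`.
theorem mobius_sub_mul {a b c d x x' y y' : K} (h : a * x + b = y * (c * x + d))
    (h' : a * x' + b = y' * (c * x' + d)) :
    (y - y') * ((c * x + d) * (c * x' + d)) = (a * d - b * c) * (x - x') := by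
  linear_combination (c * x + d) * h' - (c * x' + d) * h

theorem crossRatio_mobius {a b c d x₀ x₁ x₂ x₃ y₀ y₁ y₂ y₃ : K} (hdet : a * d - b * c ≠ 0)
    (h₀ : a * x₀ + b = y₀ * (c * x₀ + d)) (h₁ : a * x₁ + b = y₁ * (c * x₁ + d))
    (h₂ : a * x₂ + b = y₂ * (c * x₂ + d)) (h₃ : a * x₃ + b = y₃ * (c * x₃ + d))
    (hd₀ : c * x₀ + d ≠ 0) (hd₁ : c * x₁ + d ≠ 0) (hd₂ : c * x₂ + d ≠ 0) (hd₃ : c * x₃ + d ≠ 0) :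
    crossRatio y₀ y₁ y₂ y₃ = crossRatio x₀ x₁ x₂ x₃ := by
  have hD : (c * x₀ + d) * (c * x₁ + d) * ((c * x₂ + d) * (c * x₃ + d)) ≠ 0 :=
    mul_ne_zero (mul_ne_zero hd₀ hd₁) (mul_ne_zero hd₂ hd₃)
  have hnum : (y₃ - y₁) * (y₂ - y₀) * ((c * x₀ + d) * (c * x₁ + d) * ((c * x₂ + d) * (c * x₃ + d)))
      = (a * d - b * c) ^ 2 * ((x₃ - x₁) * (x₂ - x₀)) := by
    linear_combination ((y₂ - y₀) * ((c * x₂ + d) * (c * x₀ + d))) * mobius_sub_mul h₃ h₁ +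
      ((a * d - b * c) * (x₃ - x₁)) * mobius_sub_mul h₂ h₀
  have hden : (y₃ - y₀) * (y₂ - y₁) * ((c * x₀ + d) * (c * x₁ + d) * ((c * x₂ + d) * (c * x₃ + d)))
      = (a * d - b * c) ^ 2 * ((x₃ - x₀) * (x₂ - x₁)) := by
    linear_combination ((y₂ - y₁) * ((c * x₂ + d) * (c * x₁ + d))) * mobius_sub_mul h₃ h₀ +
      ((a * d - b * c) * (x₃ - x₀)) * mobius_sub_mul h₂ h₁
  rw [crossRatio, ← mul_div_mul_right _ _ hD, hnum, hden,
    mul_div_mul_left _ _ (pow_ne_zero 2 hdet), crossRatio]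

theorem quadratic_eq_zero_of_three_roots {c₂ c₁ c₀ x₁ x₂ x₃ : K} (h₁₂ : x₁ ≠ x₂) (h₁₃ : x₁ ≠ x₃)
    (h₂₃ : x₂ ≠ x₃) (hx₁ : c₂ * x₁ ^ 2 + c₁ * x₁ + c₀ = 0) (hx₂ : c₂ * x₂ ^ 2 + c₁ * x₂ + c₀ = 0)
    (hx₃ : c₂ * x₃ ^ 2 + c₁ * x₃ + c₀ = 0) : c₂ = 0 ∧ c₁ = 0 ∧ c₀ = 0 := by
  have e₁₂ : c₂ * (x₁ + x₂) + c₁ = 0 := (mul_eq_zero.1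
    (by linear_combination hx₁ - hx₂ : (x₁ - x₂) * (c₂ * (x₁ + x₂) + c₁) = 0)).resolve_left
      (sub_ne_zero.2 h₁₂)
  have e₂₃ : c₂ * (x₂ + x₃) + c₁ = 0 := (mul_eq_zero.1
    (by linear_combination hx₂ - hx₃ : (x₂ - x₃) * (c₂ * (x₂ + x₃) + c₁) = 0)).resolve_left
      (sub_ne_zero.2 h₂₃)
  have hc₂ : c₂ = 0 :=
    (mul_eq_zero.1 (by linear_combination e₁₂ - e₂₃ : (x₁ - x₃) * c₂ = 0)).resolve_left
      (sub_ne_zero.2 h₁₃)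
  have hc₁ : c₁ = 0 := by linear_combination e₁₂ - (x₁ + x₂) * hc₂
  exact ⟨hc₂, hc₁, by linear_combination hx₁ - x₁ ^ 2 * hc₂ - x₁ * hc₁⟩

theorem mobius_eq_smul_of_three_points {a b c d a' b' c' d' x₁ x₂ x₃ y₁ y₂ y₃ : K}
    (h₁₂ : x₁ ≠ x₂) (h₁₃ : x₁ ≠ x₃) (h₂₃ : x₂ ≠ x₃)
    (hdet : a * d - b * c ≠ 0) (hdet' : a' * d' - b' * c' ≠ 0)
    (h₁ : a * x₁ + b = y₁ * (c * x₁ + d)) (h₂ : a * x₂ + b = y₂ * (c * x₂ + d))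
    (h₃ : a * x₃ + b = y₃ * (c * x₃ + d))
    (h₁' : a' * x₁ + b' = y₁ * (c' * x₁ + d')) (h₂' : a' * x₂ + b' = y₂ * (c' * x₂ + d'))
    (h₃' : a' * x₃ + b' = y₃ * (c' * x₃ + d')) :
    ∃ t ≠ 0, a' = t * a ∧ b' = t * b ∧ c' = t * c ∧ d' = t * d := by
  -- eliminating `y` between the two relations leaves a quadratic in `x` with roots `x₁, x₂, x₃`
  obtain ⟨e₂, e₁, e₀⟩ := quadratic_eq_zero_of_three_roots (c₂ := a * c' - a' * c)
    (c₁ := a * d' + b * c' - a' * d - b' * c) (c₀ := b * d' - b' * d) h₁₂ h₁₃ h₂₃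
    (by linear_combination (c' * x₁ + d') * h₁ - (c * x₁ + d) * h₁')
    (by linear_combination (c' * x₂ + d') * h₂ - (c * x₂ + d) * h₂')
    (by linear_combination (c' * x₃ + d') * h₃ - (c * x₃ + d) * h₃')
  set s := d * a' - b * c'
  have ka : (a * d - b * c) * a' = s * a := by linear_combination b * e₂
  have kb : (a * d - b * c) * b' = s * b := by linear_combination b * e₁ - a * e₀
  have kc : (a * d - b * c) * c' = s * c := by linear_combination d * e₂
  have kd : (a * d - b * c) * d' = s * d := by linear_combination d * e₁ - c * e₀
  have hs : s ≠ 0 := by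
    intro hs
    simp only [hs, zero_mul, mul_eq_zero, hdet, false_or] at ka kb kc kd
    simp [ka, kb, kc, kd] at hdet'
  refine ⟨s / (a * d - b * c), div_ne_zero hs hdet, ?_, ?_, ?_, ?_⟩ <;>
    rw [div_mul_eq_mul_div, eq_div_iff hdet]
  exacts [by linear_combination ka, by linear_combination kb, by linear_combination kc,
    by linear_combination kd]

theorem exists_mobius_of_crossRatio_eq {x₀ x₁ x₂ x₃ y₀ y₁ y₂ y₃ : K}
    (hx₀₁ : x₀ ≠ x₁) (hx₀₂ : x₀ ≠ x₂) (hx₀₃ : x₀ ≠ x₃) (hx₁₂ : x₁ ≠ x₂)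
    (hy₀₁ : y₀ ≠ y₁) (hy₀₂ : y₀ ≠ y₂) (hy₀₃ : y₀ ≠ y₃) (hy₁₂ : y₁ ≠ y₂)
    (h : crossRatio x₀ x₁ x₂ x₃ = crossRatio y₀ y₁ y₂ y₃) :
    ∃ a b c d : K, a * d - b * c ≠ 0 ∧ a * x₀ + b = y₀ * (c * x₀ + d) ∧
      a * x₁ + b = y₁ * (c * x₁ + d) ∧ a * x₂ + b = y₂ * (c * x₂ + d) ∧
      a * x₃ + b = y₃ * (c * x₃ + d) := by
  rw [crossRatio_eq_iff hx₀₃ hx₁₂ hy₀₃ hy₁₂] at h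
  -- `z ↦ crossRatio x₀ x₁ x₂ z` sends `x₀, x₁, x₂` to `∞, 0, 1`; the matrix below is that map
  -- followed by the inverse of its analogue for `y₀, y₁, y₂`
  refine ⟨(y₂ - y₀) * (x₂ - x₁) * y₁ - (y₂ - y₁) * (x₂ - x₀) * y₀,
    (y₂ - y₁) * (x₂ - x₀) * x₁ * y₀ - (y₂ - y₀) * (x₂ - x₁) * x₀ * y₁,
    (y₂ - y₀) * (x₂ - x₁) - (y₂ - y₁) * (x₂ - x₀),
    (y₂ - y₁) * (x₂ - x₀) * x₁ - (y₂ - y₀) * (x₂ - x₁) * x₀, ?_, by ring, by ring, by ring,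
    by linear_combination h⟩
  have : (y₂ - y₁) * (y₂ - y₀) * (y₀ - y₁) * ((x₂ - x₁) * (x₂ - x₀) * (x₀ - x₁)) ≠ 0 := by
    simp [sub_eq_zero, hx₀₁, hx₀₂.symm, hx₁₂.symm, hy₀₁, hy₀₂.symm, hy₁₂.symm]
  convert this using 1
  ring

theorem exists_fixed_mobius_of_crossRatio_eq (φ : K →+* K) {x y : ℕ → K}
    (hx : ∀ i, x (i + 1) = φ (x i)) (hy : ∀ i, y (i + 1) = φ (y i))
    (hx₄ : Set.InjOn x (Set.Iio 4)) (hy₄ : Set.InjOn y (Set.Iio 4))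
    (h : crossRatio (x 0) (x 1) (x 2) (x 3) = crossRatio (y 0) (y 1) (y 2) (y 3)) :
    ∃ a b c d : K, φ a = a ∧ φ b = b ∧ φ c = c ∧ φ d = d ∧ a * d - b * c ≠ 0 ∧
      a * x 0 + b = y 0 * (c * x 0 + d) := by
  have hne {z : ℕ → K} (hz : Set.InjOn z (Set.Iio 4)) (i j : ℕ) (hi : i < 4 := by decide)
      (hj : j < 4 := by decide) (hij : i ≠ j := by decide) : z i ≠ z j :=
    fun e ↦ hij (hz hi hj e)
  obtain ⟨a, b, c, d, hdet, h₀, h₁, h₂, h₃⟩ := exists_mobius_of_crossRatio_eq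
    (hne hx₄ 0 1) (hne hx₄ 0 2) (hne hx₄ 0 3) (hne hx₄ 1 2)
    (hne hy₄ 0 1) (hne hy₄ 0 2) (hne hy₄ 0 3) (hne hy₄ 1 2) h
  have hφ {i : ℕ} (hi : a * x i + b = y i * (c * x i + d)) :
      φ a * x (i + 1) + φ b = y (i + 1) * (φ c * x (i + 1) + φ d) := by
    simpa [hx, hy] using congrArg φ hi
  have hφdet : φ a * φ d - φ b * φ c ≠ 0 := by
    simpa [← map_mul, ← map_sub] using hdet
  -- `φ` applied to the matrix still sends `x₁, x₂, x₃` to `y₁, y₂, y₃`, hence is a multiple of it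
  obtain ⟨t, ht, ha, hb, hc, hd⟩ := mobius_eq_smul_of_three_points (hne hx₄ 1 2) (hne hx₄ 1 3)
    (hne hx₄ 2 3) hdet hφdet h₁ h₂ h₃ (hφ h₀) (hφ h₁) (hφ h₂)
  obtain ⟨g, hg, hφg⟩ : ∃ g ≠ 0, φ g = t * g := by
    by_cases hc0 : c = 0
    · exact ⟨d, fun hd0 ↦ hdet (by simp [hc0, hd0]), hd⟩
    · exact ⟨c, hc0, hc⟩
  refine ⟨a / g, b / g, c / g, d / g, ?_, ?_, ?_, ?_, ?_, ?_⟩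
  · rw [map_div₀, ha, hφg, mul_div_mul_left _ _ ht]
  · rw [map_div₀, hb, hφg, mul_div_mul_left _ _ ht]
  · rw [map_div₀, hc, hφg, mul_div_mul_left _ _ ht]
  · rw [map_div₀, hd, hφg, mul_div_mul_left _ _ ht]
  · rw [div_mul_div_comm, div_mul_div_comm, div_sub_div_same]
    exact div_ne_zero hdet (mul_ne_zero hg hg)
  · field_simp
    linear_combination h₀

end Mobius

section Transform

variable {F : Type*} [Field F]

theorem natDegree_transform_le (n : ℕ) (a b c d : F) (f : F[X]) :
    (transform n a b c d f).natDegree ≤ n := by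
  refine natDegree_sum_le_of_forall_le _ _ fun i hi ↦ ?_
  have hi : i ≤ n := Nat.lt_succ_iff.1 (Finset.mem_range.1 hi)
  calc _ ≤ 0 + i * 1 + (n - i) * 1 :=
        natDegree_mul_le_of_le
          (natDegree_mul_le_of_le (natDegree_C _).le (natDegree_pow_le_of_le _ (by compute_degree)))
          (natDegree_pow_le_of_le _ (by compute_degree))
    _ = n := by omega

theorem mul_aeval_transform {L : Type*} [Field L] [Algebra F L] {n : ℕ} {a b c d : F} {f : F[X]}
    (hf : f.natDegree ≤ n) {x y : L}
    (h : algebraMap F L a * x + algebraMap F L b = y * (algebraMap F L c * x + algebraMap F L d)) :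
    (algebraMap F L c * x + algebraMap F L d) ^ n * aeval y (transform n a b c d f) =
      algebraMap F L (a * d - b * c) ^ n * aeval x f := by
  set A := algebraMap F L
  set u := A c * x + A d
  set D := A (a * d - b * c) with hD
  have hnum : (A d * y - A b) * u = D * x := by
    simp only [hD, map_sub, map_mul]; linear_combination -(A d) * h
  have hden : (A a - A c * y) * u = D := by
    simp only [hD, map_sub, map_mul]; linear_combination A c * h
  rw [transform, map_sum, Finset.mul_sum, aeval_eq_sum_range' (Nat.lt_succ_of_le hf),
    Finset.mul_sum]
  refine Finset.sum_congr rfl fun i hi ↦ ?_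
  obtain ⟨k, rfl⟩ := Nat.exists_eq_add_of_le (Nat.lt_succ_iff.1 (Finset.mem_range.1 hi))
  simp only [map_mul, map_pow, map_sub, aeval_C, aeval_X, Nat.add_sub_cancel_left, Algebra.smul_def]
  calc u ^ (i + k) * (A (f.coeff i) * (A d * y - A b) ^ i * (A a - A c * y) ^ k)
      = A (f.coeff i) * ((A d * y - A b) * u) ^ i * ((A a - A c * y) * u) ^ k := by
        rw [mul_pow, mul_pow]; ring
    _ = D ^ (i + k) * (A (f.coeff i) * x ^ i) := by rw [hnum, hden, mul_pow]; ring

theorem aeval_transform_eq_zero {L : Type*} [Field L] [Algebra F L] {n : ℕ} {a b c d : F}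
    {f : F[X]} (hf : f.natDegree ≤ n) {x y : L}
    (h : algebraMap F L a * x + algebraMap F L b = y * (algebraMap F L c * x + algebraMap F L d))
    (hden : algebraMap F L c * x + algebraMap F L d ≠ 0) (hx : aeval x f = 0) :
    aeval y (transform n a b c d f) = 0 := by
  have := mul_aeval_transform hf h
  rwa [hx, mul_zero, mul_eq_zero, or_iff_right (pow_ne_zero n hden)] at this

theorem transform_ne_zero {n : ℕ} {a b c d : F} {f : F[X]} (hdet : a * d - b * c ≠ 0)
    (hf : f.natDegree ≤ n) (hroot : ∀ t, ¬f.IsRoot t) : transform n a b c d f ≠ 0 := by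
  obtain ⟨t, ht⟩ : ∃ t, c * t + d ≠ 0 := by
    by_cases hd : d = 0
    · exact ⟨1, fun hc ↦ hdet (by simp_all)⟩
    · exact ⟨0, by simpa⟩
  intro h0
  have := mul_aeval_transform (L := F) (a := a) (b := b) (c := c) (d := d) hf (x := t)
    (y := (a * t + b) / (c * t + d))
    (by simp [div_mul_cancel₀ _ ht])
  exact hroot t (by simpa [h0, hdet] using this)

end Transform

section Charpoly

variable {F K : Type*} [Field F] [Field K] [Algebra F K] [FiniteDimensional F K]

theorem aeval_minpoly_eq_zero_of_aeval_charpoly_eq_zero {L : Type*} [Field L] [Algebra F L]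
    (x : K) {y : L} (hy : aeval y (LinearMap.mulLeft F x).charpoly = 0) :
    aeval y (minpoly F x) = 0 := by
  have hf : (Algebra.lmul L (L ⊗[F] K) (1 ⊗ₜ x)).HasEigenvalue y := by
    rw [Module.End.hasEigenvalue_iff_isRoot_charpoly, ← Algebra.baseChange_lmul,
      LinearMap.charpoly_baseChange, IsRoot, eval_map_algebraMap]
    exact hy
  obtain ⟨v, hv⟩ := hf.exists_hasEigenvector
  have hzero : aeval (Algebra.lmul L (L ⊗[F] K) (1 ⊗ₜ x))
      ((minpoly F x).map (algebraMap F L)) = 0 := by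
    rw [aeval_algHom_apply, aeval_map_algebraMap, ← Algebra.TensorProduct.includeRight_apply,
      aeval_algHom_apply, minpoly.aeval, map_zero, map_zero]
  have := Module.End.aeval_apply_of_hasEigenvector (p := (minpoly F x).map (algebraMap F L)) hv
  rw [hzero, LinearMap.zero_apply, eq_comm, smul_eq_zero, eval_map_algebraMap] at this
  exact this.resolve_right hv.2

theorem minpoly_eq_of_charpoly_mulLeft_eq {x y : K}
    (h : (LinearMap.mulLeft F x).charpoly = (LinearMap.mulLeft F y).charpoly) :
    minpoly F x = minpoly F y := by
  have hy : aeval y (LinearMap.mulLeft F x).charpoly = 0 := by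
    rw [h]; exact Algebra.aeval_self_charpoly_lmul y
  exact minpoly.eq_of_irreducible_of_monic (minpoly.irreducible (.of_finite F x))
    (aeval_minpoly_eq_zero_of_aeval_charpoly_eq_zero x hy) (minpoly.monic (.of_finite F x))

theorem charpoly_mulLeft_algEquiv (σ : K ≃ₐ[F] K) (x : K) :
    (LinearMap.mulLeft F (σ x)).charpoly = (LinearMap.mulLeft F x).charpoly := by
  rw [← σ.toLinearEquiv.charpoly_conj (LinearMap.mulLeft F x)]
  congr 1
  ext z
  simp [LinearEquiv.conj_apply]

theorem charpoly_mulLeft_eq_iff [Normal F K] {x y : K} :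
    (LinearMap.mulLeft F x).charpoly = (LinearMap.mulLeft F y).charpoly ↔
      ∃ σ : K ≃ₐ[F] K, σ x = y := by
  refine ⟨fun h ↦ ?_, fun ⟨σ, hσ⟩ ↦ hσ ▸ (charpoly_mulLeft_algEquiv σ x).symm⟩
  exact (Normal.minpoly_eq_iff_mem_orbit K).1 (minpoly_eq_of_charpoly_mulLeft_eq h).symm

omit [FiniteDimensional F K] in
theorem exists_algEquiv_apply_eq_of_aeval_eq_zero [Normal F K] {f : F[X]} (hf : Irreducible f)
    {x y : K} (hx : aeval x f = 0) (hy : aeval y f = 0) : ∃ σ : K ≃ₐ[F] K, σ x = y := by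
  have h := (minpoly.eq_of_irreducible hf hx).symm.trans (minpoly.eq_of_irreducible hf hy)
  exact (Normal.minpoly_eq_iff_mem_orbit K).1 h.symm

end Charpoly

section FiniteField

open FiniteField

variable {F K : Type*} [Field F] [Fintype F] [Field K] [Fintype K] [Algebra F K]

theorem frobeniusAlgEquivOfAlgebraic_pow_apply (i : ℕ) (x : K) :
    (frobeniusAlgEquivOfAlgebraic F K ^ i) x = x ^ Fintype.card F ^ i := by
  rw [AlgEquiv.coe_pow, coe_frobeniusAlgEquivOfAlgebraic_iterate]

theorem mem_range_algebraMap_of_pow_card_eq {x : K} (hx : x ^ Fintype.card F = x) :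
    x ∈ Set.range (algebraMap F K) :=
  (IsGalois.mem_range_algebraMap_iff_fixed x).2 fun σ ↦ by
    obtain ⟨i, rfl⟩ := (bijective_frobeniusAlgEquivOfAlgebraic_pow F K).2 σ
    rw [AlgEquiv.coe_pow]
    exact Function.iterate_fixed hx _

theorem pow_card_pow_injOn {f : F[X]} (hf : Irreducible f)
    (hdeg : f.natDegree = Module.finrank F K) {α : K} (hα : aeval α f = 0) :
    Set.InjOn (α ^ Fintype.card F ^ ·) (Set.Iio (Module.finrank F K)) := by
  intro i hi j hj hij
  have htop : IntermediateField.adjoin F {α} = ⊤ := by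
    refine IntermediateField.eq_of_le_of_finrank_eq le_top ?_
    rw [IntermediateField.adjoin.finrank (.of_finite F α), IntermediateField.finrank_top', ← hdeg,
      ← minpoly.eq_of_irreducible hf hα,
      natDegree_mul_C (inv_ne_zero (leadingCoeff_ne_zero.2 hf.ne_zero))]
  -- the Frobenius powers `φ ^ i` and `φ ^ j` agree on the generator `α`, hence everywhere
  have hφ : frobeniusAlgEquivOfAlgebraic F K ^ i = frobeniusAlgEquivOfAlgebraic F K ^ j := by
    refine AlgEquiv.coe_toAlgHom_injective (AlgHom.ext_of_adjoin_eq_top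
      ((IntermediateField.adjoin_simple_eq_top_iff_of_isAlgebraic (.of_finite F α)).1 htop) ?_)
    rintro _ rfl
    simpa [frobeniusAlgEquivOfAlgebraic_pow_apply] using hij
  exact congrArg Fin.val ((bijective_frobeniusAlgEquivOfAlgebraic_pow F K).1
    (a₁ := ⟨i, hi⟩) (a₂ := ⟨j, hj⟩) hφ)

end FiniteField

section CrossPolynomial

open FiniteField

-- `χ(f)` of the paper for a root `α` of `f`, with `q = #F`.
def frobCrossRatio {K : Type*} [Field K] (q : ℕ) (α : K) : K :=
  crossRatio α (α ^ q) (α ^ q ^ 2) (α ^ q ^ 3)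

theorem map_frobCrossRatio {K L G : Type*} [Field K] [Field L] [FunLike G K L]
    [RingHomClass G K L] (σ : G) (q : ℕ) (α : K) :
    σ (frobCrossRatio q α) = frobCrossRatio q (σ α) := by
  simp [frobCrossRatio, map_crossRatio]

variable {F K : Type*} [Field F] [Field K] [Algebra F K]

theorem not_mem_range_algebraMap_of_aeval_eq_zero {f : F[X]} (hf : Irreducible f)
    (hdeg : f.natDegree ≠ 1) {α : K} (hα : aeval α f = 0) : α ∉ Set.range (algebraMap F K) := by
  rintro ⟨t, rfl⟩
  rw [aeval_algebraMap_apply, map_eq_zero_iff _ (algebraMap F K).injective] at hα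
  exact hf.not_isRoot_of_natDegree_ne_one hdeg hα

theorem mobius_denom_ne_zero {a b c d : F} (hdet : a * d - b * c ≠ 0) {α : K}
    (hα : α ∉ Set.range (algebraMap F K)) : algebraMap F K c * α + algebraMap F K d ≠ 0 := by
  intro h
  by_cases hc : c = 0
  · simp_all
  · refine hα ⟨-d / c, ?_⟩
    rw [map_div₀, map_neg, div_eq_iff (by simpa using hc)]
    linear_combination -h

theorem exists_C_mul_eq_of_aeval_eq_zero {f g : F[X]} (hf : f.Monic) (hi : Irreducible f) {x : K}
    (hfx : aeval x f = 0) (hgx : aeval x g = 0) (hg : g ≠ 0) (hdeg : g.natDegree ≤ f.natDegree) :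
    ∃ e ≠ 0, C e * f = g := by
  have hdvd : f ∣ g := minpoly.eq_of_irreducible_of_monic hi hfx hf ▸ minpoly.dvd F x hgx
  exact ⟨g.leadingCoeff, leadingCoeff_ne_zero.2 hg,
    (eq_leadingCoeff_mul_of_monic_of_dvd_of_natDegree_le hf hdvd hdeg).symm⟩

variable [Fintype F] [Fintype K]

theorem frobCrossRatio_eq_of_mobius {a b c d : F} (hdet : a * d - b * c ≠ 0) {α β : K}
    (hα : α ∉ Set.range (algebraMap F K))
    (h : algebraMap F K a * α + algebraMap F K b = β * (algebraMap F K c * α + algebraMap F K d)) :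
    frobCrossRatio (Fintype.card F) β = frobCrossRatio (Fintype.card F) α := by
  have hden := mobius_denom_ne_zero hdet hα
  have hconj (i : ℕ) : algebraMap F K a * α ^ Fintype.card F ^ i + algebraMap F K b =
        β ^ Fintype.card F ^ i * (algebraMap F K c * α ^ Fintype.card F ^ i + algebraMap F K d) ∧
      algebraMap F K c * α ^ Fintype.card F ^ i + algebraMap F K d ≠ 0 := by
    simp only [← frobeniusAlgEquivOfAlgebraic_pow_apply]
    constructor
    · simpa only [map_add, map_mul, AlgEquiv.commutes] using
        congrArg (frobeniusAlgEquivOfAlgebraic F K ^ i) h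
    · simpa only [map_add, map_mul, AlgEquiv.commutes] using
        (map_ne_zero (frobeniusAlgEquivOfAlgebraic F K ^ i)).2 hden
  have hdet' : algebraMap F K a * algebraMap F K d - algebraMap F K b * algebraMap F K c ≠ 0 := by
    simpa [← map_mul, ← map_sub] using hdet
  simpa [frobCrossRatio] using crossRatio_mobius hdet' (hconj 0).1 (hconj 1).1 (hconj 2).1
    (hconj 3).1 (hconj 0).2 (hconj 1).2 (hconj 2).2 (hconj 3).2

theorem exists_mobius_of_frobCrossRatio_eq {α β : K}
    (hα : Set.InjOn (α ^ Fintype.card F ^ ·) (Set.Iio 4))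
    (hβ : Set.InjOn (β ^ Fintype.card F ^ ·) (Set.Iio 4))
    (h : frobCrossRatio (Fintype.card F) α = frobCrossRatio (Fintype.card F) β) :
    ∃ a b c d : F, a * d - b * c ≠ 0 ∧
      algebraMap F K a * α + algebraMap F K b = β * (algebraMap F K c * α + algebraMap F K d) := by
  have hφ (γ : K) (i : ℕ) : γ ^ Fintype.card F ^ (i + 1) =
      (frobeniusAlgEquivOfAlgebraic F K : K →+* K) (γ ^ Fintype.card F ^ i) := by
    simp [pow_succ, pow_mul]
  obtain ⟨a, b, c, d, ha, hb, hc, hd, hdet, h₀⟩ :=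
    exists_fixed_mobius_of_crossRatio_eq _ (hφ α) (hφ β) hα hβ (by simpa [frobCrossRatio] using h)
  obtain ⟨a, rfl⟩ := mem_range_algebraMap_of_pow_card_eq ha
  obtain ⟨b, rfl⟩ := mem_range_algebraMap_of_pow_card_eq hb
  obtain ⟨c, rfl⟩ := mem_range_algebraMap_of_pow_card_eq hc
  obtain ⟨d, rfl⟩ := mem_range_algebraMap_of_pow_card_eq hd
  exact ⟨a, b, c, d, fun h0 ↦ hdet (by simp [← map_mul, ← map_sub, h0]), by simpa using h₀⟩

end CrossPolynomial

section Orbits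

variable {F K : Type*} [Field F] [Fintype F] [Field K] [Fintype K] [Algebra F K]

theorem exists_algEquiv_map_frobCrossRatio_of_transform {n : ℕ} {f₁ f₂ : F[X]}
    (hi₁ : Irreducible f₁) (hi₂ : Irreducible f₂) (hd₁ : f₁.natDegree = n) (hn : 2 ≤ n)
    {α₁ α₂ : K} (hr₁ : aeval α₁ f₁ = 0) (hr₂ : aeval α₂ f₂ = 0) {a b c d e : F}
    (hdet : a * d - b * c ≠ 0) (he : e ≠ 0) (hf : C e * f₂ = transform n a b c d f₁) :
    ∃ σ : K ≃ₐ[F] K,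
      σ (frobCrossRatio (Fintype.card F) α₁) = frobCrossRatio (Fintype.card F) α₂ := by
  have hα₁ := not_mem_range_algebraMap_of_aeval_eq_zero hi₁ (by omega) hr₁
  have hden := mobius_denom_ne_zero hdet hα₁
  set β := (algebraMap F K a * α₁ + algebraMap F K b) / (algebraMap F K c * α₁ + algebraMap F K d)
  have hβ : algebraMap F K a * α₁ + algebraMap F K b =
      β * (algebraMap F K c * α₁ + algebraMap F K d) := (div_mul_cancel₀ _ hden).symm
  have hβf₂ : aeval β f₂ = 0 := by
    have := aeval_transform_eq_zero hd₁.le hβ hden hr₁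
    rwa [← hf, map_mul, aeval_C, mul_eq_zero, or_iff_right (by simpa using he)] at this
  obtain ⟨σ, hσ⟩ := exists_algEquiv_apply_eq_of_aeval_eq_zero hi₂ hr₂ hβf₂
  refine ⟨σ.symm, (AlgEquiv.symm_apply_eq σ).2 ?_⟩
  rw [map_frobCrossRatio, hσ, frobCrossRatio_eq_of_mobius hdet hα₁ hβ]

theorem exists_transform_eq_C_mul_of_map_frobCrossRatio {f₁ f₂ : F[X]} (hm₂ : f₂.Monic)
    (hi₁ : Irreducible f₁) (hi₂ : Irreducible f₂) (hd₁ : f₁.natDegree = Module.finrank F K)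
    (hd₂ : f₂.natDegree = Module.finrank F K) (hn : 4 ≤ Module.finrank F K) {α₁ α₂ : K}
    (hr₁ : aeval α₁ f₁ = 0) (hr₂ : aeval α₂ f₂ = 0) (σ : K ≃ₐ[F] K)
    (hσ : σ (frobCrossRatio (Fintype.card F) α₁) = frobCrossRatio (Fintype.card F) α₂) :
    ∃ a b c d : F, a * d - b * c ≠ 0 ∧
      ∃ e : F, e ≠ 0 ∧ C e * f₂ = transform (Module.finrank F K) a b c d f₁ := by
  have hconj {f : F[X]} (hi : Irreducible f) (hd : f.natDegree = Module.finrank F K) {γ : K}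
      (hγ : aeval γ f = 0) : Set.InjOn (γ ^ Fintype.card F ^ ·) (Set.Iio 4) :=
    (pow_card_pow_injOn hi hd hγ).mono (Set.Iio_subset_Iio hn)
  have hγ : aeval (σ α₁) f₁ = 0 := by rw [aeval_algEquiv, AlgHom.comp_apply, hr₁, map_zero]
  obtain ⟨a, b, c, d, hdet, hsend⟩ := exists_mobius_of_frobCrossRatio_eq (hconj hi₁ hd₁ hγ)
    (hconj hi₂ hd₂ hr₂) (by rw [← map_frobCrossRatio, hσ])
  have hroot := aeval_transform_eq_zero hd₁.le hsend
    (mobius_denom_ne_zero hdet (not_mem_range_algebraMap_of_aeval_eq_zero hi₁ (by omega) hγ)) hγ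
  have hne := transform_ne_zero hdet hd₁.le fun _ ↦ hi₁.not_isRoot_of_natDegree_ne_one (by omega)
  exact ⟨a, b, c, d, hdet, exists_C_mul_eq_of_aeval_eq_zero hm₂ hi₂ hr₂ hroot hne
    (hd₂ ▸ natDegree_transform_le _ a b c d f₁)⟩

end Orbits

theorem stmt_15_general (q n : ℕ) (hn : 4 ≤ n)
    (F K : Type*) [Field F] [Fintype F] (hF : Fintype.card F = q)
    [Field K] [Fintype K] [Algebra F K] (hK : Fintype.card K = q ^ n)
    (f₁ f₂ : Polynomial F) (hm₂ : f₂.Monic)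
    (hi₁ : Irreducible f₁) (hi₂ : Irreducible f₂)
    (hd₁ : f₁.natDegree = n) (hd₂ : f₂.natDegree = n)
    (α₁ α₂ : K) (hr₁ : Polynomial.aeval α₁ f₁ = 0) (hr₂ : Polynomial.aeval α₂ f₂ = 0)
    (χ₁ χ₂ : K)
    (hχ₁ : χ₁ = ((α₁ ^ q ^ 3 - α₁ ^ q) * (α₁ ^ q ^ 2 - α₁)) /
               ((α₁ ^ q ^ 3 - α₁) * (α₁ ^ q ^ 2 - α₁ ^ q)))
    (hχ₂ : χ₂ = ((α₂ ^ q ^ 3 - α₂ ^ q) * (α₂ ^ q ^ 2 - α₂)) /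
               ((α₂ ^ q ^ 3 - α₂) * (α₂ ^ q ^ 2 - α₂ ^ q))) :
    (∃ a b c d : F, a * d - b * c ≠ 0 ∧
        ∃ e : F, e ≠ 0 ∧ Polynomial.C e * f₂ = transform n a b c d f₁)
      ↔ LinearMap.charpoly (LinearMap.mulLeft F χ₁)
          = LinearMap.charpoly (LinearMap.mulLeft F χ₂) := by
  subst hF
  obtain rfl : Module.finrank F K = n := by
    have hcard := Module.card_eq_pow_finrank (K := F) (V := K)
    rw [hK] at hcard
    exact Nat.pow_right_injective Fintype.one_lt_card hcard.symm
  change χ₁ = frobCrossRatio _ α₁ at hχ₁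
  change χ₂ = frobCrossRatio _ α₂ at hχ₂
  subst hχ₁ hχ₂
  rw [charpoly_mulLeft_eq_iff]
  constructor
  · rintro ⟨a, b, c, d, hdet, e, he, hf⟩
    exact exists_algEquiv_map_frobCrossRatio_of_transform hi₁ hi₂ hd₁ (by omega) hr₁ hr₂ hdet he hf
  · rintro ⟨σ, hσ⟩
    exact exists_transform_eq_C_mul_of_map_frobCrossRatio hm₂ hi₁ hi₂ hd₁ hd₂ hn hr₁ hr₂ σ hσ

/-- Theorem 2.11 of the paper.  For `n ≥ 4`, two monic
irreducible degree-`n` polynomials over `F_q` lie in the same `PGL₂(F_q)`-orbit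
(where the class of `(a b; c d)` sends the homogenization `f(x,y)` to the monic
scalar multiple of `f(dx − by, −cx + ay)`) if and only if they have the same cross
polynomial, i.e. the characteristic polynomials of multiplication by the cross
ratios `χᵢ` of the conjugates `αᵢ, αᵢ^q, αᵢ^{q²}, αᵢ^{q³}` of constituent roots
agree. -/
theorem stmt_15 (q n : ℕ) (hq : IsPrimePow q) (hn : 4 ≤ n)
    (F K : Type*) [Field F] [Fintype F] (hF : Fintype.card F = q)
    [Field K] [Fintype K] [Algebra F K] [Module.Finite F K] (hK : Fintype.card K = q ^ n)
    (f₁ f₂ : Polynomial F) (hm₁ : f₁.Monic) (hm₂ : f₂.Monic)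
    (hi₁ : Irreducible f₁) (hi₂ : Irreducible f₂)
    (hd₁ : f₁.natDegree = n) (hd₂ : f₂.natDegree = n)
    (α₁ α₂ : K) (hr₁ : Polynomial.aeval α₁ f₁ = 0) (hr₂ : Polynomial.aeval α₂ f₂ = 0)
    (χ₁ χ₂ : K)
    (hχ₁ : χ₁ = ((α₁ ^ q ^ 3 - α₁ ^ q) * (α₁ ^ q ^ 2 - α₁)) /
               ((α₁ ^ q ^ 3 - α₁) * (α₁ ^ q ^ 2 - α₁ ^ q)))
    (hχ₂ : χ₂ = ((α₂ ^ q ^ 3 - α₂ ^ q) * (α₂ ^ q ^ 2 - α₂)) /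
               ((α₂ ^ q ^ 3 - α₂) * (α₂ ^ q ^ 2 - α₂ ^ q))) :
    (∃ a b c d : F, a * d - b * c ≠ 0 ∧
        ∃ e : F, e ≠ 0 ∧ Polynomial.C e * f₂ = transform n a b c d f₁)
      ↔ LinearMap.charpoly (LinearMap.mulLeft F χ₁)
          = LinearMap.charpoly (LinearMap.mulLeft F χ₂) :=
  stmt_15_general q n hn F K hF hK f₁ f₂ hm₂ hi₁ hi₂ hd₁ hd₂ α₁ α₂ hr₁ hr₂ χ₁ χ₂ hχ₁ hχ₂
end
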